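/- arXiv:1407.1447 — 9 statements merged into one kernel-verified Lean document; each statement's English description precedes it below -/
import Mathlib

section
/- Let P₁, P₂, P₃, P₄, P₅, P₆ be six pairwise non-proportional nonzero vectors of ℂ³ all lying on the conic K = {y : y₀y₂ = y₁²}. Then the three cross-hair points X₁ = (P₁×P₅)×(P₂×P₄), X₂ = (P₁×P₆)×(P₃×P₄), X₃ = (P₂×P₆)×(P₃×P₅) of the array [[P₁,P₂,P₃],[P₄,P₅,P₆]] are collinear, i.e. the determinant of the 3×3 matrix with rows X₁, X₂, X₃ is zero (Pascal's theorem). -/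
open Matrix

namespace PascalStmt

noncomputable section

/-- Membership in the conic `K = {y : y₀y₂ = y₁²}`. -/
def OnK (y : Fin 3 → ℂ) : Prop := y 0 * y 2 = y 1 ^ 2

/-- The tangent line to `K` at a point `y` of `K`. -/
def tangentK (y : Fin 3 → ℂ) : Fin 3 → ℂ := ![y 2, -(2 * y 1), y 0]

/-- First cross-hair point of the array `[[P₁,P₂,P₃],[P₄,P₅,P₆]]`. -/
def chX1 (P₁ P₂ P₃ P₄ P₅ P₆ : Fin 3 → ℂ) : Fin 3 → ℂ := (P₁ ⨯₃ P₅) ⨯₃ (P₂ ⨯₃ P₄)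

/-- Second cross-hair point of the array `[[P₁,P₂,P₃],[P₄,P₅,P₆]]`. -/
def chX2 (P₁ P₂ P₃ P₄ P₅ P₆ : Fin 3 → ℂ) : Fin 3 → ℂ := (P₁ ⨯₃ P₆) ⨯₃ (P₃ ⨯₃ P₄)

/-- Third cross-hair point of the array `[[P₁,P₂,P₃],[P₄,P₅,P₆]]`. -/
def chX3 (P₁ P₂ P₃ P₄ P₅ P₆ : Fin 3 → ℂ) : Fin 3 → ℂ := (P₂ ⨯₃ P₆) ⨯₃ (P₃ ⨯₃ P₅)

/-- The Pascal line vector of the array `[[P₁,P₂,P₃],[P₄,P₅,P₆]]`. -/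
def pascalVec (P₁ P₂ P₃ P₄ P₅ P₆ : Fin 3 → ℂ) : Fin 3 → ℂ :=
  chX1 P₁ P₂ P₃ P₄ P₅ P₆ ⨯₃ chX2 P₁ P₂ P₃ P₄ P₅ P₆

/-- Six points, pairwise non-proportional (in particular all nonzero). -/
def PairwiseNonProp (P : Fin 6 → (Fin 3 → ℂ)) : Prop :=
  ∀ i j, i ≠ j → ∀ c : ℂ, P i ≠ c • P j


/-- Any point of `K` is a scalar multiple of a Veronese point. -/
lemma onK_param {P : Fin 3 → ℂ} (hP : OnK P) :
    ∃ c s t : ℂ, P = c • ![s ^ 2, s * t, t ^ 2] := by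
  by_cases h0 : P 0 = 0
  · have h1 : P 1 = 0 := by
      have := hP
      rw [OnK, h0] at this
      have : P 1 ^ 2 = 0 := by linear_combination -this
      exact pow_eq_zero_iff (two_ne_zero) |>.mp this
    refine ⟨P 2, 0, 1, ?_⟩
    funext i
    fin_cases i <;> simp [h0, h1]
  · refine ⟨(P 0)⁻¹, P 0, P 1, ?_⟩
    have hPe : P = ![P 0, P 1, P 2] := by
      funext i; fin_cases i <;> rfl
    rw [hPe]
    rw [OnK] at hP
    funext i
    fin_cases i <;>
      simp only [Fin.zero_eta, Fin.mk_one, Fin.reduceFinMk, Fin.isValue, Pi.smul_apply, Matrix.cons_val_zero, Matrix.cons_val_one, Matrix.head_cons,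
        Matrix.cons_val_two, Matrix.tail_cons, smul_eq_mul]
    · field_simp
    · field_simp
    · field_simp; linear_combination hP

lemma cross4_smul (a b c d : ℂ) (u v w x : Fin 3 → ℂ) :
    ((a • u) ⨯₃ (b • v)) ⨯₃ ((c • w) ⨯₃ (d • x)) =
      (a * b * c * d) • ((u ⨯₃ v) ⨯₃ (w ⨯₃ x)) := by
  funext i
  fin_cases i <;>
    simp [cross_apply, Matrix.smul_cons, smul_eq_mul] <;>
    ring

lemma det_rows_smul (a b c : ℂ) (u v w : Fin 3 → ℂ) :
    (Matrix.of ![a • u, b • v, c • w]).det = a * b * c * (Matrix.of ![u, v, w]).det := by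
  simp only [det_fin_three, Matrix.of_apply, Matrix.cons_val_zero, Matrix.cons_val_one,
    Matrix.head_cons, Matrix.cons_val_two, Matrix.tail_cons, Pi.smul_apply, smul_eq_mul]
  ring

set_option maxHeartbeats 2000000 in
lemma key (s1 t1 s2 t2 s3 t3 s4 t4 s5 t5 s6 t6 : ℂ) :
    (Matrix.of ![(![s1^2, s1*t1, t1^2] ⨯₃ ![s5^2, s5*t5, t5^2]) ⨯₃ (![s2^2, s2*t2, t2^2] ⨯₃ ![s4^2, s4*t4, t4^2]),
                 (![s1^2, s1*t1, t1^2] ⨯₃ ![s6^2, s6*t6, t6^2]) ⨯₃ (![s3^2, s3*t3, t3^2] ⨯₃ ![s4^2, s4*t4, t4^2]),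
                 (![s2^2, s2*t2, t2^2] ⨯₃ ![s6^2, s6*t6, t6^2]) ⨯₃ (![s3^2, s3*t3, t3^2] ⨯₃ ![s5^2, s5*t5, t5^2])]).det = 0 := by
  rw [det_fin_three]
  simp only [cross_apply, Matrix.of_apply, Matrix.cons_val_zero, Matrix.cons_val_one,
    Matrix.head_cons, Matrix.cons_val_two, Matrix.tail_cons]
  ring

theorem pascal_collinear
    (P₁ P₂ P₃ P₄ P₅ P₆ : Fin 3 → ℂ)
    (h₁ : P₁ ≠ 0) (h₂ : P₂ ≠ 0) (h₃ : P₃ ≠ 0)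
    (h₄ : P₄ ≠ 0) (h₅ : P₅ ≠ 0) (h₆ : P₆ ≠ 0)
    (hdist : PairwiseNonProp ![P₁, P₂, P₃, P₄, P₅, P₆])
    (hK₁ : OnK P₁) (hK₂ : OnK P₂) (hK₃ : OnK P₃)
    (hK₄ : OnK P₄) (hK₅ : OnK P₅) (hK₆ : OnK P₆) :
    (Matrix.of ![chX1 P₁ P₂ P₃ P₄ P₅ P₆,
                 chX2 P₁ P₂ P₃ P₄ P₅ P₆,
                 chX3 P₁ P₂ P₃ P₄ P₅ P₆]).det = 0 := by
  obtain ⟨c1, s1, t1, e1⟩ := onK_param hK₁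
  obtain ⟨c2, s2, t2, e2⟩ := onK_param hK₂
  obtain ⟨c3, s3, t3, e3⟩ := onK_param hK₃
  obtain ⟨c4, s4, t4, e4⟩ := onK_param hK₄
  obtain ⟨c5, s5, t5, e5⟩ := onK_param hK₅
  obtain ⟨c6, s6, t6, e6⟩ := onK_param hK₆
  rw [chX1, chX2, chX3, e1, e2, e3, e4, e5, e6, cross4_smul, cross4_smul, cross4_smul,
    det_rows_smul, key, mul_zero]


end

end PascalStmt
end

section
/- Let A, B, C, D, E, F be six pairwise non-proportional points of the conic K such that the three chords AF, BE, CD are concurrent, i.e. det[(A×F), (B×E), (C×D)] = 0. Then the four Pascal lines of the arrays [[A,B,C],[F,E,D]], [[A,B,D],[F,E,C]], [[F,B,C],[A,E,D]] and [[A,E,C],[F,B,D]] all coincide: the cross product of the Pascal vectors of any two of these arrays is the zero vector. -/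
open Matrix

namespace PascalStmt

noncomputable section

/-! ### Auxiliary machinery for the proof -/

/-- The Veronese parametrization of `K`. -/
def nuv (s t : ℂ) : Fin 3 → ℂ := ![s^2, s*t, t^2]

/-- Reduced chord vector of the two conic points with parameters `(s,t)`, `(s',t')`. -/
def lin (s t s' t' : ℂ) : Fin 3 → ℂ := ![t*t', -(s*t' + s'*t), s*s']

/-- Reduced cross-hair point. -/
def xx (s1 t1 s2 t2 s3 t3 s4 t4 : ℂ) : Fin 3 → ℂ := lin s1 t1 s2 t2 ⨯₃ lin s3 t3 s4 t4

/-- Reduced Pascal vector. -/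
def pvr (s1 t1 s2 t2 s3 t3 s4 t4 s5 t5 s6 t6 : ℂ) : Fin 3 → ℂ :=
  xx s1 t1 s5 t5 s2 t2 s4 t4 ⨯₃ xx s1 t1 s6 t6 s3 t3 s4 t4

lemma cross_smul₂ (c d : ℂ) (u v : Fin 3 → ℂ) : (c • u) ⨯₃ (d • v) = (c*d) • (u ⨯₃ v) := by
  ext i; fin_cases i <;> simp [cross_apply] <;> ring

lemma cross_nu (s t s' t' : ℂ) : nuv s t ⨯₃ nuv s' t' = (s*t' - s'*t) • lin s t s' t' := by
  ext i; fin_cases i <;> simp [cross_apply, nuv, lin] <;> ring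

lemma param {y : Fin 3 → ℂ} (h : OnK y) (h0 : y ≠ 0) :
    ∃ c s t : ℂ, c ≠ 0 ∧ y = c • nuv s t := by
  by_cases hy0 : y 0 = 0
  · have hy1 : y 1 = 0 := by
      rw [OnK, hy0, zero_mul] at h
      exact pow_eq_zero_iff (n := 2) (by norm_num) |>.mp h.symm
    have hy2 : y 2 ≠ 0 := by
      intro h2; apply h0; ext i; fin_cases i <;> simp [hy0, hy1, h2]
    exact ⟨y 2, 0, 1, hy2, by ext i; fin_cases i <;> simp [nuv, hy0, hy1]⟩
  · refine ⟨y 0, 1, y 1 / y 0, hy0, ?_⟩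
    have hK := h
    rw [OnK] at hK
    ext i; fin_cases i
    · simp [nuv]
    · simp [nuv]; field_simp
    · simp [nuv]; field_simp; linear_combination hK

lemma m_ne {c c' s t s' t' : ℂ} (hc : c ≠ 0) (hc' : c' ≠ 0)
    (hQ : c' • nuv s' t' ≠ 0)
    (h : ∀ k : ℂ, c • nuv s t ≠ k • (c' • nuv s' t')) :
    s * t' - s' * t ≠ 0 := by
  intro hm
  by_cases ht' : t' = 0
  · have hs' : s' ≠ 0 := by
      intro h0; apply hQ; ext i; fin_cases i <;> simp [nuv, h0, ht']
    have ht : t = 0 := by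
      rw [ht'] at hm
      have h2 : s' * t = 0 := by linear_combination -hm
      exact (mul_eq_zero.mp h2).resolve_left hs'
    apply h (c * s^2 / (c' * s'^2))
    ext i; fin_cases i <;> simp [nuv, ht, ht'] <;> field_simp
  · apply h (c * t^2 / (c' * t'^2))
    ext i; fin_cases i <;> (simp [nuv]; field_simp)
    · linear_combination (s*t' + s'*t) * hm
    · linear_combination t * hm

lemma pascalVec_param (a b c d e f sa ta sb tb sc tc sd td se te sf tf : ℂ) :
    pascalVec (a • nuv sa ta) (b • nuv sb tb) (c • nuv sc tc)
      (d • nuv sd td) (e • nuv se te) (f • nuv sf tf)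
    = ((a^2*d^2*b*c*e*f) * ((sa*te - se*ta)*(sb*td - sd*tb)*(sa*tf - sf*ta)*(sc*td - sd*tc))) •
      pvr sa ta sb tb sc tc sd td se te sf tf := by
  unfold pascalVec chX1 chX2 pvr xx
  simp only [cross_smul₂, cross_nu, smul_smul]
  congr 1
  ring

lemma det_rows_eq (k₁ k₂ k₃ : ℂ) (r₁ r₂ r₃ : Fin 3 → ℂ) :
    (Matrix.of ![k₁ • r₁, k₂ • r₂, k₃ • r₃]).det = (k₁*k₂*k₃) * (Matrix.of ![r₁, r₂, r₃]).det := by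
  simp [Matrix.det_fin_three]; ring

lemma lin_det (sa ta sb tb sc tc sd td se te sf tf : ℂ) :
    (Matrix.of ![lin sa ta sf tf, lin sb tb se te, lin sc tc sd td]).det
    = -sa*sb*tc*td*se*tf + sa*sb*tc*td*te*sf + sa*tb*sc*sd*te*tf - sa*tb*sc*td*te*sf - sa*tb*tc*sd*te*sf + sa*tb*tc*td*se*sf - ta*sb*sc*sd*te*tf + ta*sb*sc*td*se*tf + ta*sb*tc*sd*se*tf - ta*sb*tc*td*se*sf - ta*tb*sc*sd*se*tf + ta*tb*sc*sd*te*sf := by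
  simp [Matrix.det_fin_three, lin]; ring

set_option maxHeartbeats 1000000 in
lemma key12 (sa ta sb tb sc tc sd td se te sf tf : ℂ)
    (h : -sa*sb*tc*td*se*tf + sa*sb*tc*td*te*sf + sa*tb*sc*sd*te*tf - sa*tb*sc*td*te*sf - sa*tb*tc*sd*te*sf + sa*tb*tc*td*se*sf - ta*sb*sc*sd*te*tf + ta*sb*sc*td*se*tf + ta*sb*tc*sd*se*tf - ta*sb*tc*td*se*sf - ta*tb*sc*sd*se*tf + ta*tb*sc*sd*te*sf = 0) :
    pvr sa ta sb tb sc tc sf tf se te sd td ⨯₃ pvr sa ta sb tb sd td sf tf se te sc tc = 0 := by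
  have e0 : (pvr sa ta sb tb sc tc sf tf se te sd td ⨯₃ pvr sa ta sb tb sd td sf tf se te sc tc) 0
      - (sa^3*sb*sc*td*se*tf^3 - sa^3*sb*sc*td*te*sf*tf^2 - sa^3*sb*tc*sd*se*tf^3 + sa^3*sb*tc*sd*te*sf*tf^2 + sa^3*tb*sc*td*se*sf*tf^2 - sa^3*tb*tc*sd*se*sf*tf^2 + (-3)*sa^2*ta*sb*sc*td*se*sf*tf^2 + (2)*sa^2*ta*sb*sc*td*te*sf^2*tf + (3)*sa^2*ta*sb*tc*sd*se*sf*tf^2 + (-2)*sa^2*ta*sb*tc*sd*te*sf^2*tf + (-2)*sa^2*ta*tb*sc*td*se*sf^2*tf + (2)*sa^2*ta*tb*tc*sd*se*sf^2*tf + (3)*sa*ta^2*sb*sc*td*se*sf^2*tf - sa*ta^2*sb*sc*td*te*sf^3 + (-3)*sa*ta^2*sb*tc*sd*se*sf^2*tf + sa*ta^2*sb*tc*sd*te*sf^3 + sa*ta^2*tb*sc*td*se*sf^3 - sa*ta^2*tb*tc*sd*se*sf^3 - ta^3*sb*sc*td*se*sf^3 + ta^3*sb*tc*sd*se*sf^3)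 * (-sa*sb*tc*td*se*tf + sa*sb*tc*td*te*sf + sa*tb*sc*sd*te*tf - sa*tb*sc*td*te*sf - sa*tb*tc*sd*te*sf + sa*tb*tc*td*se*sf - ta*sb*sc*sd*te*tf + ta*sb*sc*td*se*tf + ta*sb*tc*sd*se*tf - ta*sb*tc*td*se*sf - ta*tb*sc*sd*se*tf + ta*tb*sc*sd*te*sf) = 0 := by
    simp only [pvr, xx, lin, cross_apply, Matrix.cons_val_zero, Matrix.cons_val_one,
      Matrix.head_cons, Matrix.cons_val_two, Matrix.tail_cons, Fin.isValue]
    ring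
  have e1 : (pvr sa ta sb tb sc tc sf tf se te sd td ⨯₃ pvr sa ta sb tb sd td sf tf se te sc tc) 1
      - (sa^3*tb*sc*td*se*tf^3 - sa^3*tb*tc*sd*se*tf^3 - sa^2*ta*sb*sc*td*te*sf*tf^2 + sa^2*ta*sb*tc*sd*te*sf*tf^2 + (-2)*sa^2*ta*tb*sc*td*se*sf*tf^2 + (2)*sa^2*ta*tb*tc*sd*se*sf*tf^2 + (2)*sa*ta^2*sb*sc*td*te*sf^2*tf + (-2)*sa*ta^2*sb*tc*sd*te*sf^2*tf + sa*ta^2*tb*sc*td*se*sf^2*tf - sa*ta^2*tb*tc*sd*se*sf^2*tf - ta^3*sb*sc*td*te*sf^3 + ta^3*sb*tc*sd*te*sf^3) * (-sa*sb*tc*td*se*tf + sa*sb*tc*td*te*sf + sa*tb*sc*sd*te*tf - sa*tb*sc*td*te*sf - sa*tb*tc*sd*te*sf + sa*tb*tc*td*se*sf - ta*sb*sc*sd*te*tf + ta*sb*sc*td*se*tf + ta*sb*tc*sd*se*tf - ta*sb*tc*td*se*sf - ta*tb*sc*sd*se*tf + ta*tb*sc*sd*te*sf) = 0 := by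
    simp only [pvr, xx, lin, cross_apply, Matrix.cons_val_zero, Matrix.cons_val_one,
      Matrix.head_cons, Matrix.cons_val_two, Matrix.tail_cons, Fin.isValue]
    ring
  have e2 : (pvr sa ta sb tb sc tc sf tf se te sd td ⨯₃ pvr sa ta sb tb sd td sf tf se te sc tc) 2
      - (sa^3*tb*sc*td*te*tf^3 - sa^3*tb*tc*sd*te*tf^3 - sa^2*ta*sb*sc*td*te*tf^3 + sa^2*ta*sb*tc*sd*te*tf^3 + sa^2*ta*tb*sc*td*se*tf^3 + (-3)*sa^2*ta*tb*sc*td*te*sf*tf^2 - sa^2*ta*tb*tc*sd*se*tf^3 + (3)*sa^2*ta*tb*tc*sd*te*sf*tf^2 + (2)*sa*ta^2*sb*sc*td*te*sf*tf^2 + (-2)*sa*ta^2*sb*tc*sd*te*sf*tf^2 + (-2)*sa*ta^2*tb*sc*td*se*sf*tf^2 + (3)*sa*ta^2*tb*sc*td*te*sf^2*tf + (2)*sa*ta^2*tb*tc*sd*se*sf*tf^2 + (-3)*sa*ta^2*tb*tc*sd*te*sf^2*tf - ta^3*sb*sc*td*te*sf^2*tf + ta^3*sb*tc*sd*te*sf^2*tf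 + ta^3*tb*sc*td*se*sf^2*tf - ta^3*tb*sc*td*te*sf^3 - ta^3*tb*tc*sd*se*sf^2*tf + ta^3*tb*tc*sd*te*sf^3) * (-sa*sb*tc*td*se*tf + sa*sb*tc*td*te*sf + sa*tb*sc*sd*te*tf - sa*tb*sc*td*te*sf - sa*tb*tc*sd*te*sf + sa*tb*tc*td*se*sf - ta*sb*sc*sd*te*tf + ta*sb*sc*td*se*tf + ta*sb*tc*sd*se*tf - ta*sb*tc*td*se*sf - ta*tb*sc*sd*se*tf + ta*tb*sc*sd*te*sf) = 0 := by
    simp only [pvr, xx, lin, cross_apply, Matrix.cons_val_zero, Matrix.cons_val_one,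
      Matrix.head_cons, Matrix.cons_val_two, Matrix.tail_cons, Fin.isValue]
    ring
  rw [h, mul_zero, sub_zero] at e0 e1 e2
  ext i; fin_cases i
  · simpa using e0
  · simpa using e1
  · simpa using e2

set_option maxHeartbeats 1000000 in
lemma key13 (sa ta sb tb sc tc sd td se te sf tf : ℂ)
    (h : -sa*sb*tc*td*se*tf + sa*sb*tc*td*te*sf + sa*tb*sc*sd*te*tf - sa*tb*sc*td*te*sf - sa*tb*tc*sd*te*sf + sa*tb*tc*td*se*sf - ta*sb*sc*sd*te*tf + ta*sb*sc*td*se*tf + ta*sb*tc*sd*se*tf - ta*sb*tc*td*se*sf - ta*tb*sc*sd*se*tf + ta*tb*sc*sd*te*sf = 0) :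
    pvr sa ta sb tb sc tc sf tf se te sd td ⨯₃ pvr sf tf sb tb sc tc sa ta se te sd td = 0 := by
  have e0 : (pvr sa ta sb tb sc tc sf tf se te sd td ⨯₃ pvr sf tf sb tb sc tc sa ta se te sd td) 0
      - (-sa^3*sb*sc*sd*te*tf^3 + sa^3*sb*sc*td*se*tf^3 - sa^3*sb*tc*sd*se*tf^3 + sa^3*tb*sc*sd*se*tf^3 + (3)*sa^2*ta*sb*sc*sd*te*sf*tf^2 + (-3)*sa^2*ta*sb*sc*td*se*sf*tf^2 + (3)*sa^2*ta*sb*tc*sd*se*sf*tf^2 + (-3)*sa^2*ta*tb*sc*sd*se*sf*tf^2 + (-3)*sa*ta^2*sb*sc*sd*te*sf^2*tf + (3)*sa*ta^2*sb*sc*td*se*sf^2*tf + (-3)*sa*ta^2*sb*tc*sd*se*sf^2*tf + (3)*sa*ta^2*tb*sc*sd*se*sf^2*tf + ta^3*sb*sc*sd*te*sf^3 - ta^3*sb*sc*td*se*sf^3 + ta^3*sb*tc*sd*se*sf^3 - ta^3*tb*sc*sd*se*sf^3) * (-sa*sb*tc*td*se*tf + sa*sb*tc*td*te*sf + sa*tb*sc*sd*te*tf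 - sa*tb*sc*td*te*sf - sa*tb*tc*sd*te*sf + sa*tb*tc*td*se*sf - ta*sb*sc*sd*te*tf + ta*sb*sc*td*se*tf + ta*sb*tc*sd*se*tf - ta*sb*tc*td*se*sf - ta*tb*sc*sd*se*tf + ta*tb*sc*sd*te*sf) = 0 := by
    simp only [pvr, xx, lin, cross_apply, Matrix.cons_val_zero, Matrix.cons_val_one,
      Matrix.head_cons, Matrix.cons_val_two, Matrix.tail_cons, Fin.isValue]
    ring
  have e1 : (pvr sa ta sb tb sc tc sf tf se te sd td ⨯₃ pvr sf tf sb tb sc tc sa ta se te sd td) 1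
      - (-sa^3*sb*tc*sd*te*tf^3 + sa^3*tb*sc*td*se*tf^3 + (3)*sa^2*ta*sb*tc*sd*te*sf*tf^2 + (-3)*sa^2*ta*tb*sc*td*se*sf*tf^2 + (-3)*sa*ta^2*sb*tc*sd*te*sf^2*tf + (3)*sa*ta^2*tb*sc*td*se*sf^2*tf + ta^3*sb*tc*sd*te*sf^3 - ta^3*tb*sc*td*se*sf^3) * (-sa*sb*tc*td*se*tf + sa*sb*tc*td*te*sf + sa*tb*sc*sd*te*tf - sa*tb*sc*td*te*sf - sa*tb*tc*sd*te*sf + sa*tb*tc*td*se*sf - ta*sb*sc*sd*te*tf + ta*sb*sc*td*se*tf + ta*sb*tc*sd*se*tf - ta*sb*tc*td*se*sf - ta*tb*sc*sd*se*tf + ta*tb*sc*sd*te*sf) = 0 := by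
    simp only [pvr, xx, lin, cross_apply, Matrix.cons_val_zero, Matrix.cons_val_one,
      Matrix.head_cons, Matrix.cons_val_two, Matrix.tail_cons, Fin.isValue]
    ring
  have e2 : (pvr sa ta sb tb sc tc sf tf se te sd td ⨯₃ pvr sf tf sb tb sc tc sa ta se te sd td) 2
      - (-sa^3*sb*tc*td*te*tf^3 + sa^3*tb*sc*td*te*tf^3 - sa^3*tb*tc*sd*te*tf^3 + sa^3*tb*tc*td*se*tf^3 + (3)*sa^2*ta*sb*tc*td*te*sf*tf^2 + (-3)*sa^2*ta*tb*sc*td*te*sf*tf^2 + (3)*sa^2*ta*tb*tc*sd*te*sf*tf^2 + (-3)*sa^2*ta*tb*tc*td*se*sf*tf^2 + (-3)*sa*ta^2*sb*tc*td*te*sf^2*tf + (3)*sa*ta^2*tb*sc*td*te*sf^2*tf + (-3)*sa*ta^2*tb*tc*sd*te*sf^2*tf + (3)*sa*ta^2*tb*tc*td*se*sf^2*tf + ta^3*sb*tc*td*te*sf^3 - ta^3*tb*sc*td*te*sf^3 + ta^3*tb*tc*sd*te*sf^3 - ta^3*tb*tc*td*se*sf^3) * (-sa*sb*tc*td*se*tf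 + sa*sb*tc*td*te*sf + sa*tb*sc*sd*te*tf - sa*tb*sc*td*te*sf - sa*tb*tc*sd*te*sf + sa*tb*tc*td*se*sf - ta*sb*sc*sd*te*tf + ta*sb*sc*td*se*tf + ta*sb*tc*sd*se*tf - ta*sb*tc*td*se*sf - ta*tb*sc*sd*se*tf + ta*tb*sc*sd*te*sf) = 0 := by
    simp only [pvr, xx, lin, cross_apply, Matrix.cons_val_zero, Matrix.cons_val_one,
      Matrix.head_cons, Matrix.cons_val_two, Matrix.tail_cons, Fin.isValue]
    ring
  rw [h, mul_zero, sub_zero] at e0 e1 e2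
  ext i; fin_cases i
  · simpa using e0
  · simpa using e1
  · simpa using e2

set_option maxHeartbeats 1000000 in
lemma key14 (sa ta sb tb sc tc sd td se te sf tf : ℂ)
    (h : -sa*sb*tc*td*se*tf + sa*sb*tc*td*te*sf + sa*tb*sc*sd*te*tf - sa*tb*sc*td*te*sf - sa*tb*tc*sd*te*sf + sa*tb*tc*td*se*sf - ta*sb*sc*sd*te*tf + ta*sb*sc*td*se*tf + ta*sb*tc*sd*se*tf - ta*sb*tc*td*se*sf - ta*tb*sc*sd*se*tf + ta*tb*sc*sd*te*sf = 0) :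
    pvr sa ta sb tb sc tc sf tf se te sd td ⨯₃ pvr sa ta se te sc tc sf tf sb tb sd td = 0 := by
  have e0 : (pvr sa ta sb tb sc tc sf tf se te sd td ⨯₃ pvr sa ta se te sc tc sf tf sb tb sd td) 0
      - (-sa^3*sb*sc*sd*te*tf^3 + sa^3*sb*sc*td*te*sf*tf^2 - sa^3*sb*tc*sd*te*sf*tf^2 + sa^3*tb*sc*sd*se*tf^3 - sa^3*tb*sc*td*se*sf*tf^2 + sa^3*tb*tc*sd*se*sf*tf^2 + (3)*sa^2*ta*sb*sc*sd*te*sf*tf^2 + (-2)*sa^2*ta*sb*sc*td*te*sf^2*tf + (2)*sa^2*ta*sb*tc*sd*te*sf^2*tf + (-3)*sa^2*ta*tb*sc*sd*se*sf*tf^2 + (2)*sa^2*ta*tb*sc*td*se*sf^2*tf + (-2)*sa^2*ta*tb*tc*sd*se*sf^2*tf + (-3)*sa*ta^2*sb*sc*sd*te*sf^2*tf + sa*ta^2*sb*sc*td*te*sf^3 - sa*ta^2*sb*tc*sd*te*sf^3 + (3)*sa*ta^2*tb*sc*sd*se*sf^2*tf - sa*ta^2*tb*sc*td*se*sf^3 +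 sa*ta^2*tb*tc*sd*se*sf^3 + ta^3*sb*sc*sd*te*sf^3 - ta^3*tb*sc*sd*se*sf^3) * (-sa*sb*tc*td*se*tf + sa*sb*tc*td*te*sf + sa*tb*sc*sd*te*tf - sa*tb*sc*td*te*sf - sa*tb*tc*sd*te*sf + sa*tb*tc*td*se*sf - ta*sb*sc*sd*te*tf + ta*sb*sc*td*se*tf + ta*sb*tc*sd*se*tf - ta*sb*tc*td*se*sf - ta*tb*sc*sd*se*tf + ta*tb*sc*sd*te*sf) = 0 := by
    simp only [pvr, xx, lin, cross_apply, Matrix.cons_val_zero, Matrix.cons_val_one,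
      Matrix.head_cons, Matrix.cons_val_two, Matrix.tail_cons, Fin.isValue]
    ring
  have e1 : (pvr sa ta sb tb sc tc sf tf se te sd td ⨯₃ pvr sa ta se te sc tc sf tf sb tb sd td) 1
      - (-sa^3*sb*tc*sd*te*tf^3 + sa^3*tb*tc*sd*se*tf^3 + sa^2*ta*sb*sc*td*te*sf*tf^2 + (2)*sa^2*ta*sb*tc*sd*te*sf*tf^2 - sa^2*ta*tb*sc*td*se*sf*tf^2 + (-2)*sa^2*ta*tb*tc*sd*se*sf*tf^2 + (-2)*sa*ta^2*sb*sc*td*te*sf^2*tf - sa*ta^2*sb*tc*sd*te*sf^2*tf + (2)*sa*ta^2*tb*sc*td*se*sf^2*tf + sa*ta^2*tb*tc*sd*se*sf^2*tf + ta^3*sb*sc*td*te*sf^3 - ta^3*tb*sc*td*se*sf^3) * (-sa*sb*tc*td*se*tf + sa*sb*tc*td*te*sf + sa*tb*sc*sd*te*tf - sa*tb*sc*td*te*sf - sa*tb*tc*sd*te*sf + sa*tb*tc*td*se*sf - ta*sb*sc*sd*te*tf + ta*sb*sc*td*se*tf + ta*sb*tc*sd*se*tf - ta*sb*tc*td*se*sf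 - ta*tb*sc*sd*se*tf + ta*tb*sc*sd*te*sf) = 0 := by
    simp only [pvr, xx, lin, cross_apply, Matrix.cons_val_zero, Matrix.cons_val_one,
      Matrix.head_cons, Matrix.cons_val_two, Matrix.tail_cons, Fin.isValue]
    ring
  have e2 : (pvr sa ta sb tb sc tc sf tf se te sd td ⨯₃ pvr sa ta se te sc tc sf tf sb tb sd td) 2
      - (-sa^3*sb*tc*td*te*tf^3 + sa^3*tb*tc*td*se*tf^3 + sa^2*ta*sb*sc*td*te*tf^3 - sa^2*ta*sb*tc*sd*te*tf^3 + (3)*sa^2*ta*sb*tc*td*te*sf*tf^2 - sa^2*ta*tb*sc*td*se*tf^3 + sa^2*ta*tb*tc*sd*se*tf^3 + (-3)*sa^2*ta*tb*tc*td*se*sf*tf^2 + (-2)*sa*ta^2*sb*sc*td*te*sf*tf^2 + (2)*sa*ta^2*sb*tc*sd*te*sf*tf^2 + (-3)*sa*ta^2*sb*tc*td*te*sf^2*tf + (2)*sa*ta^2*tb*sc*td*se*sf*tf^2 + (-2)*sa*ta^2*tb*tc*sd*se*sf*tf^2 + (3)*sa*ta^2*tb*tc*td*se*sf^2*tf + ta^3*sb*sc*td*te*sf^2*tf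 - ta^3*sb*tc*sd*te*sf^2*tf + ta^3*sb*tc*td*te*sf^3 - ta^3*tb*sc*td*se*sf^2*tf + ta^3*tb*tc*sd*se*sf^2*tf - ta^3*tb*tc*td*se*sf^3) * (-sa*sb*tc*td*se*tf + sa*sb*tc*td*te*sf + sa*tb*sc*sd*te*tf - sa*tb*sc*td*te*sf - sa*tb*tc*sd*te*sf + sa*tb*tc*td*se*sf - ta*sb*sc*sd*te*tf + ta*sb*sc*td*se*tf + ta*sb*tc*sd*se*tf - ta*sb*tc*td*se*sf - ta*tb*sc*sd*se*tf + ta*tb*sc*sd*te*sf) = 0 := by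
    simp only [pvr, xx, lin, cross_apply, Matrix.cons_val_zero, Matrix.cons_val_one,
      Matrix.head_cons, Matrix.cons_val_two, Matrix.tail_cons, Fin.isValue]
    ring
  rw [h, mul_zero, sub_zero] at e0 e1 e2
  ext i; fin_cases i
  · simpa using e0
  · simpa using e1
  · simpa using e2

set_option maxHeartbeats 1000000 in
lemma key23 (sa ta sb tb sc tc sd td se te sf tf : ℂ)
    (h : -sa*sb*tc*td*se*tf + sa*sb*tc*td*te*sf + sa*tb*sc*sd*te*tf - sa*tb*sc*td*te*sf - sa*tb*tc*sd*te*sf + sa*tb*tc*td*se*sf - ta*sb*sc*sd*te*tf + ta*sb*sc*td*se*tf + ta*sb*tc*sd*se*tf - ta*sb*tc*td*se*sf - ta*tb*sc*sd*se*tf + ta*tb*sc*sd*te*sf = 0) :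
    pvr sa ta sb tb sd td sf tf se te sc tc ⨯₃ pvr sf tf sb tb sc tc sa ta se te sd td = 0 := by
  have e0 : (pvr sa ta sb tb sd td sf tf se te sc tc ⨯₃ pvr sf tf sb tb sc tc sa ta se te sd td) 0
      - (-sa^3*sb*sc*sd*te*tf^3 - sa^3*sb*sc*td*te*sf*tf^2 + sa^3*sb*tc*sd*te*sf*tf^2 + sa^3*tb*sc*sd*se*tf^3 + sa^3*tb*sc*td*se*sf*tf^2 - sa^3*tb*tc*sd*se*sf*tf^2 + (3)*sa^2*ta*sb*sc*sd*te*sf*tf^2 + (2)*sa^2*ta*sb*sc*td*te*sf^2*tf + (-2)*sa^2*ta*sb*tc*sd*te*sf^2*tf + (-3)*sa^2*ta*tb*sc*sd*se*sf*tf^2 + (-2)*sa^2*ta*tb*sc*td*se*sf^2*tf + (2)*sa^2*ta*tb*tc*sd*se*sf^2*tf + (-3)*sa*ta^2*sb*sc*sd*te*sf^2*tf - sa*ta^2*sb*sc*td*te*sf^3 + sa*ta^2*sb*tc*sd*te*sf^3 + (3)*sa*ta^2*tb*sc*sd*se*sf^2*tf + sa*ta^2*tb*sc*td*se*sf^3 -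 sa*ta^2*tb*tc*sd*se*sf^3 + ta^3*sb*sc*sd*te*sf^3 - ta^3*tb*sc*sd*se*sf^3) * (-sa*sb*tc*td*se*tf + sa*sb*tc*td*te*sf + sa*tb*sc*sd*te*tf - sa*tb*sc*td*te*sf - sa*tb*tc*sd*te*sf + sa*tb*tc*td*se*sf - ta*sb*sc*sd*te*tf + ta*sb*sc*td*se*tf + ta*sb*tc*sd*se*tf - ta*sb*tc*td*se*sf - ta*tb*sc*sd*se*tf + ta*tb*sc*sd*te*sf) = 0 := by
    simp only [pvr, xx, lin, cross_apply, Matrix.cons_val_zero, Matrix.cons_val_one,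
      Matrix.head_cons, Matrix.cons_val_two, Matrix.tail_cons, Fin.isValue]
    ring
  have e1 : (pvr sa ta sb tb sd td sf tf se te sc tc ⨯₃ pvr sf tf sb tb sc tc sa ta se te sd td) 1
      - (-sa^3*sb*sc*td*te*tf^3 + sa^3*tb*sc*td*se*tf^3 + (2)*sa^2*ta*sb*sc*td*te*sf*tf^2 + sa^2*ta*sb*tc*sd*te*sf*tf^2 + (-2)*sa^2*ta*tb*sc*td*se*sf*tf^2 - sa^2*ta*tb*tc*sd*se*sf*tf^2 - sa*ta^2*sb*sc*td*te*sf^2*tf + (-2)*sa*ta^2*sb*tc*sd*te*sf^2*tf + sa*ta^2*tb*sc*td*se*sf^2*tf + (2)*sa*ta^2*tb*tc*sd*se*sf^2*tf + ta^3*sb*tc*sd*te*sf^3 - ta^3*tb*tc*sd*se*sf^3) * (-sa*sb*tc*td*se*tf + sa*sb*tc*td*te*sf + sa*tb*sc*sd*te*tf - sa*tb*sc*td*te*sf - sa*tb*tc*sd*te*sf + sa*tb*tc*td*se*sf - ta*sb*sc*sd*te*tf + ta*sb*sc*td*se*tf + ta*sb*tc*sd*se*tf - ta*sb*tc*td*se*sf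 - ta*tb*sc*sd*se*tf + ta*tb*sc*sd*te*sf) = 0 := by
    simp only [pvr, xx, lin, cross_apply, Matrix.cons_val_zero, Matrix.cons_val_one,
      Matrix.head_cons, Matrix.cons_val_two, Matrix.tail_cons, Fin.isValue]
    ring
  have e2 : (pvr sa ta sb tb sd td sf tf se te sc tc ⨯₃ pvr sf tf sb tb sc tc sa ta se te sd td) 2
      - (-sa^3*sb*tc*td*te*tf^3 + sa^3*tb*tc*td*se*tf^3 - sa^2*ta*sb*sc*td*te*tf^3 + sa^2*ta*sb*tc*sd*te*tf^3 + (3)*sa^2*ta*sb*tc*td*te*sf*tf^2 + sa^2*ta*tb*sc*td*se*tf^3 - sa^2*ta*tb*tc*sd*se*tf^3 + (-3)*sa^2*ta*tb*tc*td*se*sf*tf^2 + (2)*sa*ta^2*sb*sc*td*te*sf*tf^2 + (-2)*sa*ta^2*sb*tc*sd*te*sf*tf^2 + (-3)*sa*ta^2*sb*tc*td*te*sf^2*tf + (-2)*sa*ta^2*tb*sc*td*se*sf*tf^2 + (2)*sa*ta^2*tb*tc*sd*se*sf*tf^2 + (3)*sa*ta^2*tb*tc*td*se*sf^2*tf - ta^3*sb*sc*td*te*sf^2*tf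 + ta^3*sb*tc*sd*te*sf^2*tf + ta^3*sb*tc*td*te*sf^3 + ta^3*tb*sc*td*se*sf^2*tf - ta^3*tb*tc*sd*se*sf^2*tf - ta^3*tb*tc*td*se*sf^3) * (-sa*sb*tc*td*se*tf + sa*sb*tc*td*te*sf + sa*tb*sc*sd*te*tf - sa*tb*sc*td*te*sf - sa*tb*tc*sd*te*sf + sa*tb*tc*td*se*sf - ta*sb*sc*sd*te*tf + ta*sb*sc*td*se*tf + ta*sb*tc*sd*se*tf - ta*sb*tc*td*se*sf - ta*tb*sc*sd*se*tf + ta*tb*sc*sd*te*sf) = 0 := by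
    simp only [pvr, xx, lin, cross_apply, Matrix.cons_val_zero, Matrix.cons_val_one,
      Matrix.head_cons, Matrix.cons_val_two, Matrix.tail_cons, Fin.isValue]
    ring
  rw [h, mul_zero, sub_zero] at e0 e1 e2
  ext i; fin_cases i
  · simpa using e0
  · simpa using e1
  · simpa using e2

set_option maxHeartbeats 1000000 in
lemma key24 (sa ta sb tb sc tc sd td se te sf tf : ℂ)
    (h : -sa*sb*tc*td*se*tf + sa*sb*tc*td*te*sf + sa*tb*sc*sd*te*tf - sa*tb*sc*td*te*sf - sa*tb*tc*sd*te*sf + sa*tb*tc*td*se*sf - ta*sb*sc*sd*te*tf + ta*sb*sc*td*se*tf + ta*sb*tc*sd*se*tf - ta*sb*tc*td*se*sf - ta*tb*sc*sd*se*tf + ta*tb*sc*sd*te*sf = 0) :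
    pvr sa ta sb tb sd td sf tf se te sc tc ⨯₃ pvr sa ta se te sc tc sf tf sb tb sd td = 0 := by
  have e0 : (pvr sa ta sb tb sd td sf tf se te sc tc ⨯₃ pvr sa ta se te sc tc sf tf sb tb sd td) 0
      - (-sa^3*sb*sc*sd*te*tf^3 - sa^3*sb*sc*td*se*tf^3 + sa^3*sb*tc*sd*se*tf^3 + sa^3*tb*sc*sd*se*tf^3 + (3)*sa^2*ta*sb*sc*sd*te*sf*tf^2 + (3)*sa^2*ta*sb*sc*td*se*sf*tf^2 + (-3)*sa^2*ta*sb*tc*sd*se*sf*tf^2 + (-3)*sa^2*ta*tb*sc*sd*se*sf*tf^2 + (-3)*sa*ta^2*sb*sc*sd*te*sf^2*tf + (-3)*sa*ta^2*sb*sc*td*se*sf^2*tf + (3)*sa*ta^2*sb*tc*sd*se*sf^2*tf + (3)*sa*ta^2*tb*sc*sd*se*sf^2*tf + ta^3*sb*sc*sd*te*sf^3 + ta^3*sb*sc*td*se*sf^3 - ta^3*sb*tc*sd*se*sf^3 - ta^3*tb*sc*sd*se*sf^3) * (-sa*sb*tc*td*se*tf + sa*sb*tc*td*te*sf + sa*tb*sc*sd*te*tf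 - sa*tb*sc*td*te*sf - sa*tb*tc*sd*te*sf + sa*tb*tc*td*se*sf - ta*sb*sc*sd*te*tf + ta*sb*sc*td*se*tf + ta*sb*tc*sd*se*tf - ta*sb*tc*td*se*sf - ta*tb*sc*sd*se*tf + ta*tb*sc*sd*te*sf) = 0 := by
    simp only [pvr, xx, lin, cross_apply, Matrix.cons_val_zero, Matrix.cons_val_one,
      Matrix.head_cons, Matrix.cons_val_two, Matrix.tail_cons, Fin.isValue]
    ring
  have e1 : (pvr sa ta sb tb sd td sf tf se te sc tc ⨯₃ pvr sa ta se te sc tc sf tf sb tb sd td) 1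
      - (-sa^3*sb*sc*td*te*tf^3 + sa^3*tb*tc*sd*se*tf^3 + (3)*sa^2*ta*sb*sc*td*te*sf*tf^2 + (-3)*sa^2*ta*tb*tc*sd*se*sf*tf^2 + (-3)*sa*ta^2*sb*sc*td*te*sf^2*tf + (3)*sa*ta^2*tb*tc*sd*se*sf^2*tf + ta^3*sb*sc*td*te*sf^3 - ta^3*tb*tc*sd*se*sf^3) * (-sa*sb*tc*td*se*tf + sa*sb*tc*td*te*sf + sa*tb*sc*sd*te*tf - sa*tb*sc*td*te*sf - sa*tb*tc*sd*te*sf + sa*tb*tc*td*se*sf - ta*sb*sc*sd*te*tf + ta*sb*sc*td*se*tf + ta*sb*tc*sd*se*tf - ta*sb*tc*td*se*sf - ta*tb*sc*sd*se*tf + ta*tb*sc*sd*te*sf) = 0 := by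
    simp only [pvr, xx, lin, cross_apply, Matrix.cons_val_zero, Matrix.cons_val_one,
      Matrix.head_cons, Matrix.cons_val_two, Matrix.tail_cons, Fin.isValue]
    ring
  have e2 : (pvr sa ta sb tb sd td sf tf se te sc tc ⨯₃ pvr sa ta se te sc tc sf tf sb tb sd td) 2
      - (-sa^3*sb*tc*td*te*tf^3 - sa^3*tb*sc*td*te*tf^3 + sa^3*tb*tc*sd*te*tf^3 + sa^3*tb*tc*td*se*tf^3 + (3)*sa^2*ta*sb*tc*td*te*sf*tf^2 + (3)*sa^2*ta*tb*sc*td*te*sf*tf^2 + (-3)*sa^2*ta*tb*tc*sd*te*sf*tf^2 + (-3)*sa^2*ta*tb*tc*td*se*sf*tf^2 + (-3)*sa*ta^2*sb*tc*td*te*sf^2*tf + (-3)*sa*ta^2*tb*sc*td*te*sf^2*tf + (3)*sa*ta^2*tb*tc*sd*te*sf^2*tf + (3)*sa*ta^2*tb*tc*td*se*sf^2*tf + ta^3*sb*tc*td*te*sf^3 + ta^3*tb*sc*td*te*sf^3 - ta^3*tb*tc*sd*te*sf^3 - ta^3*tb*tc*td*se*sf^3) * (-sa*sb*tc*td*se*tf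 + sa*sb*tc*td*te*sf + sa*tb*sc*sd*te*tf - sa*tb*sc*td*te*sf - sa*tb*tc*sd*te*sf + sa*tb*tc*td*se*sf - ta*sb*sc*sd*te*tf + ta*sb*sc*td*se*tf + ta*sb*tc*sd*se*tf - ta*sb*tc*td*se*sf - ta*tb*sc*sd*se*tf + ta*tb*sc*sd*te*sf) = 0 := by
    simp only [pvr, xx, lin, cross_apply, Matrix.cons_val_zero, Matrix.cons_val_one,
      Matrix.head_cons, Matrix.cons_val_two, Matrix.tail_cons, Fin.isValue]
    ring
  rw [h, mul_zero, sub_zero] at e0 e1 e2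
  ext i; fin_cases i
  · simpa using e0
  · simpa using e1
  · simpa using e2

set_option maxHeartbeats 1000000 in
lemma key34 (sa ta sb tb sc tc sd td se te sf tf : ℂ)
    (h : -sa*sb*tc*td*se*tf + sa*sb*tc*td*te*sf + sa*tb*sc*sd*te*tf - sa*tb*sc*td*te*sf - sa*tb*tc*sd*te*sf + sa*tb*tc*td*se*sf - ta*sb*sc*sd*te*tf + ta*sb*sc*td*se*tf + ta*sb*tc*sd*se*tf - ta*sb*tc*td*se*sf - ta*tb*sc*sd*se*tf + ta*tb*sc*sd*te*sf = 0) :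
    pvr sf tf sb tb sc tc sa ta se te sd td ⨯₃ pvr sa ta se te sc tc sf tf sb tb sd td = 0 := by
  have e0 : (pvr sf tf sb tb sc tc sa ta se te sd td ⨯₃ pvr sa ta se te sc tc sf tf sb tb sd td) 0
      - (-sa^3*sb*sc*td*se*tf^3 - sa^3*sb*sc*td*te*sf*tf^2 + sa^3*sb*tc*sd*se*tf^3 + sa^3*sb*tc*sd*te*sf*tf^2 + sa^3*tb*sc*td*se*sf*tf^2 - sa^3*tb*tc*sd*se*sf*tf^2 + (3)*sa^2*ta*sb*sc*td*se*sf*tf^2 + (2)*sa^2*ta*sb*sc*td*te*sf^2*tf + (-3)*sa^2*ta*sb*tc*sd*se*sf*tf^2 + (-2)*sa^2*ta*sb*tc*sd*te*sf^2*tf + (-2)*sa^2*ta*tb*sc*td*se*sf^2*tf + (2)*sa^2*ta*tb*tc*sd*se*sf^2*tf + (-3)*sa*ta^2*sb*sc*td*se*sf^2*tf - sa*ta^2*sb*sc*td*te*sf^3 + (3)*sa*ta^2*sb*tc*sd*se*sf^2*tf + sa*ta^2*sb*tc*sd*te*sf^3 + sa*ta^2*tb*sc*td*se*sf^3 - sa*ta^2*tb*tc*sd*se*sf^3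 + ta^3*sb*sc*td*se*sf^3 - ta^3*sb*tc*sd*se*sf^3) * (-sa*sb*tc*td*se*tf + sa*sb*tc*td*te*sf + sa*tb*sc*sd*te*tf - sa*tb*sc*td*te*sf - sa*tb*tc*sd*te*sf + sa*tb*tc*td*se*sf - ta*sb*sc*sd*te*tf + ta*sb*sc*td*se*tf + ta*sb*tc*sd*se*tf - ta*sb*tc*td*se*sf - ta*tb*sc*sd*se*tf + ta*tb*sc*sd*te*sf) = 0 := by
    simp only [pvr, xx, lin, cross_apply, Matrix.cons_val_zero, Matrix.cons_val_one,
      Matrix.head_cons, Matrix.cons_val_two, Matrix.tail_cons, Fin.isValue]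
    ring
  have e1 : (pvr sf tf sb tb sc tc sa ta se te sd td ⨯₃ pvr sa ta se te sc tc sf tf sb tb sd td) 1
      - (-sa^3*sb*sc*td*te*tf^3 + sa^3*sb*tc*sd*te*tf^3 + (2)*sa^2*ta*sb*sc*td*te*sf*tf^2 + (-2)*sa^2*ta*sb*tc*sd*te*sf*tf^2 + sa^2*ta*tb*sc*td*se*sf*tf^2 - sa^2*ta*tb*tc*sd*se*sf*tf^2 - sa*ta^2*sb*sc*td*te*sf^2*tf + sa*ta^2*sb*tc*sd*te*sf^2*tf + (-2)*sa*ta^2*tb*sc*td*se*sf^2*tf + (2)*sa*ta^2*tb*tc*sd*se*sf^2*tf + ta^3*tb*sc*td*se*sf^3 - ta^3*tb*tc*sd*se*sf^3) * (-sa*sb*tc*td*se*tf + sa*sb*tc*td*te*sf + sa*tb*sc*sd*te*tf - sa*tb*sc*td*te*sf - sa*tb*tc*sd*te*sf + sa*tb*tc*td*se*sf - ta*sb*sc*sd*te*tf + ta*sb*sc*td*se*tf + ta*sb*tc*sd*se*tf - ta*sb*tc*td*se*sf - ta*tb*sc*sd*se*tf + ta*tb*sc*sd*te*sf) = 0 :=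 by
    simp only [pvr, xx, lin, cross_apply, Matrix.cons_val_zero, Matrix.cons_val_one,
      Matrix.head_cons, Matrix.cons_val_two, Matrix.tail_cons, Fin.isValue]
    ring
  have e2 : (pvr sf tf sb tb sc tc sa ta se te sd td ⨯₃ pvr sa ta se te sc tc sf tf sb tb sd td) 2
      - (-sa^3*tb*sc*td*te*tf^3 + sa^3*tb*tc*sd*te*tf^3 - sa^2*ta*sb*sc*td*te*tf^3 + sa^2*ta*sb*tc*sd*te*tf^3 + sa^2*ta*tb*sc*td*se*tf^3 + (3)*sa^2*ta*tb*sc*td*te*sf*tf^2 - sa^2*ta*tb*tc*sd*se*tf^3 + (-3)*sa^2*ta*tb*tc*sd*te*sf*tf^2 + (2)*sa*ta^2*sb*sc*td*te*sf*tf^2 + (-2)*sa*ta^2*sb*tc*sd*te*sf*tf^2 + (-2)*sa*ta^2*tb*sc*td*se*sf*tf^2 + (-3)*sa*ta^2*tb*sc*td*te*sf^2*tf + (2)*sa*ta^2*tb*tc*sd*se*sf*tf^2 + (3)*sa*ta^2*tb*tc*sd*te*sf^2*tf - ta^3*sb*sc*td*te*sf^2*tf + ta^3*sb*tc*sd*te*sf^2*tf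 + ta^3*tb*sc*td*se*sf^2*tf + ta^3*tb*sc*td*te*sf^3 - ta^3*tb*tc*sd*se*sf^2*tf - ta^3*tb*tc*sd*te*sf^3) * (-sa*sb*tc*td*se*tf + sa*sb*tc*td*te*sf + sa*tb*sc*sd*te*tf - sa*tb*sc*td*te*sf - sa*tb*tc*sd*te*sf + sa*tb*tc*td*se*sf - ta*sb*sc*sd*te*tf + ta*sb*sc*td*se*tf + ta*sb*tc*sd*se*tf - ta*sb*tc*td*se*sf - ta*tb*sc*sd*se*tf + ta*tb*sc*sd*te*sf) = 0 := by
    simp only [pvr, xx, lin, cross_apply, Matrix.cons_val_zero, Matrix.cons_val_one,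
      Matrix.head_cons, Matrix.cons_val_two, Matrix.tail_cons, Fin.isValue]
    ring
  rw [h, mul_zero, sub_zero] at e0 e1 e2
  ext i; fin_cases i
  · simpa using e0
  · simpa using e1
  · simpa using e2


theorem involution_pascals_coincide
    (A B C D E F : Fin 3 → ℂ)
    (hdist : PairwiseNonProp ![A, B, C, D, E, F])
    (hKA : OnK A) (hKB : OnK B) (hKC : OnK C)
    (hKD : OnK D) (hKE : OnK E) (hKF : OnK F)
    (hconc : (Matrix.of ![A ⨯₃ F, B ⨯₃ E, C ⨯₃ D]).det = 0) :
    pascalVec A B C F E D ⨯₃ pascalVec A B D F E C = 0 ∧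
    pascalVec A B C F E D ⨯₃ pascalVec F B C A E D = 0 ∧
    pascalVec A B C F E D ⨯₃ pascalVec A E C F B D = 0 ∧
    pascalVec A B D F E C ⨯₃ pascalVec F B C A E D = 0 ∧
    pascalVec A B D F E C ⨯₃ pascalVec A E C F B D = 0 ∧
    pascalVec F B C A E D ⨯₃ pascalVec A E C F B D = 0 := by
  have hA0 : A ≠ 0 := by simpa using hdist 0 1 (by decide) 0
  have hB0 : B ≠ 0 := by simpa using hdist 1 0 (by decide) 0
  have hC0 : C ≠ 0 := by simpa using hdist 2 0 (by decide) 0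
  have hD0 : D ≠ 0 := by simpa using hdist 3 0 (by decide) 0
  have hE0 : E ≠ 0 := by simpa using hdist 4 0 (by decide) 0
  have hF0 : F ≠ 0 := by simpa using hdist 5 0 (by decide) 0
  obtain ⟨a, sa, ta, ha, hA⟩ := param hKA hA0
  obtain ⟨b, sb, tb, hb, hB⟩ := param hKB hB0
  obtain ⟨c, sc, tc, hc, hC⟩ := param hKC hC0
  obtain ⟨d, sd, td, hd, hD⟩ := param hKD hD0
  obtain ⟨e, se, te, he, hE⟩ := param hKE hE0
  obtain ⟨f, sf, tf, hf, hF⟩ := param hKF hF0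
  have hAF : sa * tf - sf * ta ≠ 0 := by
    apply m_ne ha hf (by rw [← hF]; exact hF0)
    intro k
    have h05 : A ≠ k • F := hdist 0 5 (by decide) k
    rw [hA, hF] at h05
    exact h05
  have hBE : sb * te - se * tb ≠ 0 := by
    apply m_ne hb he (by rw [← hE]; exact hE0)
    intro k
    have h14 : B ≠ k • E := hdist 1 4 (by decide) k
    rw [hB, hE] at h14
    exact h14
  have hCD : sc * td - sd * tc ≠ 0 := by
    apply m_ne hc hd (by rw [← hD]; exact hD0)
    intro k
    have h23 : C ≠ k • D := hdist 2 3 (by decide) k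
    rw [hC, hD] at h23
    exact h23
  rw [hA, hB, hC, hD, hE, hF] at hconc ⊢
  rw [cross_smul₂, cross_smul₂, cross_smul₂, cross_nu, cross_nu, cross_nu,
    smul_smul, smul_smul, smul_smul, det_rows_eq, lin_det] at hconc
  have hΔ : -sa*sb*tc*td*se*tf + sa*sb*tc*td*te*sf + sa*tb*sc*sd*te*tf - sa*tb*sc*td*te*sf - sa*tb*tc*sd*te*sf + sa*tb*tc*td*se*sf - ta*sb*sc*sd*te*tf + ta*sb*sc*td*se*tf + ta*sb*tc*sd*se*tf - ta*sb*tc*td*se*sf - ta*tb*sc*sd*se*tf + ta*tb*sc*sd*te*sf = 0 := by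
    rcases mul_eq_zero.mp hconc with h | h
    · exact absurd h (mul_ne_zero (mul_ne_zero
        (mul_ne_zero (mul_ne_zero ha hf) hAF)
        (mul_ne_zero (mul_ne_zero hb he) hBE))
        (mul_ne_zero (mul_ne_zero hc hd) hCD))
    · exact h
  refine ⟨?_, ?_, ?_, ?_, ?_, ?_⟩
  · rw [pascalVec_param, pascalVec_param, cross_smul₂,
      key12 sa ta sb tb sc tc sd td se te sf tf hΔ, smul_zero]
  · rw [pascalVec_param, pascalVec_param, cross_smul₂,
      key13 sa ta sb tb sc tc sd td se te sf tf hΔ, smul_zero]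
  · rw [pascalVec_param, pascalVec_param, cross_smul₂,
      key14 sa ta sb tb sc tc sd td se te sf tf hΔ, smul_zero]
  · rw [pascalVec_param, pascalVec_param, cross_smul₂,
      key23 sa ta sb tb sc tc sd td se te sf tf hΔ, smul_zero]
  · rw [pascalVec_param, pascalVec_param, cross_smul₂,
      key24 sa ta sb tb sc tc sd td se te sf tf hΔ, smul_zero]
  · rw [pascalVec_param, pascalVec_param, cross_smul₂,
      key34 sa ta sb tb sc tc sd td se te sf tf hΔ, smul_zero]

end

end PascalStmt
end

section
/- Let p, q, r ∈ ℂ be pairwise distinct with none equal to 0 or 1, and set A = (1,0,0), B = (1,1,1), C = (0,0,1), D = (1,p,p²), E = (1,q,q²), F = (1,r,r²) on the conic K. Then each of the three cross-hair points X of the array [[A,B,C],[F,E,D]] satisfies r(q−p)·X₀ + (pr − pq + p − q)·X₁ + (q − r)·X₂ = 0; that is, the Pascal line of this array is the line {y : r(q−p)y₀ + (pr−pq+p−q)y₁ + (q−r)y₂ = 0}. -/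
open Matrix

namespace PascalStmt

noncomputable section

theorem pascal_line_k123
    (p q r : ℂ)
    (hpq : p ≠ q) (hpr : p ≠ r) (hqr : q ≠ r)
    (hp0 : p ≠ 0) (hq0 : q ≠ 0) (hr0 : r ≠ 0)
    (hp1 : p ≠ 1) (hq1 : q ≠ 1) (hr1 : r ≠ 1)
    (A B C D E F : Fin 3 → ℂ)
    (hA : A = ![1, 0, 0]) (hB : B = ![1, 1, 1]) (hC : C = ![0, 0, 1])
    (hD : D = ![1, p, p ^ 2]) (hE : E = ![1, q, q ^ 2]) (hF : F = ![1, r, r ^ 2]) :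
    (r * (q - p) * chX1 A B C F E D 0 + (p * r - p * q + p - q) * chX1 A B C F E D 1
        + (q - r) * chX1 A B C F E D 2 = 0) ∧
    (r * (q - p) * chX2 A B C F E D 0 + (p * r - p * q + p - q) * chX2 A B C F E D 1
        + (q - r) * chX2 A B C F E D 2 = 0) ∧
    (r * (q - p) * chX3 A B C F E D 0 + (p * r - p * q + p - q) * chX3 A B C F E D 1
        + (q - r) * chX3 A B C F E D 2 = 0) := by
  subst hA hB hC hD hE hF
  refine ⟨?_, ?_, ?_⟩ <;>
    simp [chX1, chX2, chX3, crossProduct] <;> ring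

end

end PascalStmt
end

section
/- Let p, q, r ∈ ℂ be pairwise distinct with none equal to 0 or 1, and set A = (1,0,0), B = (1,1,1), C = (0,0,1), D = (1,p,p²), E = (1,q,q²), F = (1,r,r²) on the conic K. Then each of the three cross-hair points X of the array [[A,D,F],[C,E,B]] satisfies pr(q−1)·X₀ + (r − pq)·X₁ + (p − r)·X₂ = 0; that is, the Pascal line of this array is the line {y : pr(q−1)y₀ + (r−pq)y₁ + (p−r)y₂ = 0}. -/
open Matrix

namespace PascalStmt

noncomputable section

theorem pascal_line_k124
    (p q r : ℂ)
    (hpq : p ≠ q) (hpr : p ≠ r) (hqr : q ≠ r)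
    (hp0 : p ≠ 0) (hq0 : q ≠ 0) (hr0 : r ≠ 0)
    (hp1 : p ≠ 1) (hq1 : q ≠ 1) (hr1 : r ≠ 1)
    (A B C D E F : Fin 3 → ℂ)
    (hA : A = ![1, 0, 0]) (hB : B = ![1, 1, 1]) (hC : C = ![0, 0, 1])
    (hD : D = ![1, p, p ^ 2]) (hE : E = ![1, q, q ^ 2]) (hF : F = ![1, r, r ^ 2]) :
    (p * r * (q - 1) * chX1 A D F C E B 0 + (r - p * q) * chX1 A D F C E B 1
        + (p - r) * chX1 A D F C E B 2 = 0) ∧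
    (p * r * (q - 1) * chX2 A D F C E B 0 + (r - p * q) * chX2 A D F C E B 1
        + (p - r) * chX2 A D F C E B 2 = 0) ∧
    (p * r * (q - 1) * chX3 A D F C E B 0 + (r - p * q) * chX3 A D F C E B 1
        + (p - r) * chX3 A D F C E B 2 = 0) := by
  subst hA hB hC hD hE hF
  refine ⟨?_, ?_, ?_⟩ <;>
    simp [chX1, chX2, chX3, crossProduct, Matrix.cons_val_zero, Matrix.cons_val_one] <;> ring

end

end PascalStmt
end

section
/- Let A, B, C, D, E, F be any six pairwise non-proportional points of the conic K. Then the Pascal lines of the arrays [[A,B,C],[F,E,D]] and [[A,D,F],[C,E,B]] never coincide: the cross product of the two Pascal vectors is nonzero. -/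
open Matrix

namespace PascalStmt

noncomputable section

/-! ### Auxiliary lemmas -/

lemma onk_param (y : Fin 3 → ℂ) (h : OnK y) :
    ∃ s t : ℂ, y = ![s^2, s*t, t^2] := by
  rw [OnK] at h
  by_cases h0 : y 0 = 0
  · have h1 : y 1 = 0 := by
      have h2 : y 1 ^ 2 = 0 := by rw [h0, zero_mul] at h; exact h.symm
      exact pow_eq_zero_iff (two_ne_zero) |>.mp h2
    obtain ⟨t, ht⟩ := IsAlgClosed.exists_pow_nat_eq (k := ℂ) (y 2) zero_lt_two
    exact ⟨0, t, by funext i; fin_cases i <;> simp [h0, h1, ← ht]⟩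
  · obtain ⟨s, hs⟩ := IsAlgClosed.exists_pow_nat_eq (k := ℂ) (y 0) zero_lt_two
    have hsne : s ≠ 0 := by rintro rfl; simp at hs; exact h0 hs.symm
    refine ⟨s, y 1 / s, ?_⟩
    funext i; fin_cases i
    · simpa using hs.symm
    · show y 1 = s * (y 1 / s); field_simp
    · show y 2 = (y 1 / s)^2
      rw [div_pow, eq_div_iff (pow_ne_zero 2 hsne), hs]
      linear_combination h

lemma d_ne (s1 t1 s2 t2 : ℂ)
    (h : ∀ c : ℂ, (![s1^2, s1*t1, t1^2] : Fin 3 → ℂ) ≠ c • ![s2^2, s2*t2, t2^2])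
    (hne : ¬(s2 = 0 ∧ t2 = 0)) :
    s1*t2 - s2*t1 ≠ 0 := by
  intro hd
  obtain ⟨l, hs1, ht1⟩ : ∃ l, s1 = l*s2 ∧ t1 = l*t2 := by
    by_cases hs2 : s2 = 0
    · have ht2 : t2 ≠ 0 := fun ht2 => hne ⟨hs2, ht2⟩
      have hs1 : s1 = 0 := by
        have h2 : s1 * t2 = 0 := by rw [hs2] at hd; linear_combination hd
        rcases mul_eq_zero.mp h2 with h'|h'
        · exact h'
        · exact absurd h' ht2
      exact ⟨t1/t2, by rw [hs1, hs2, mul_zero], by field_simp⟩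
    · refine ⟨s1/s2, by field_simp, ?_⟩
      rw [div_mul_eq_mul_div, eq_div_iff hs2]
      linear_combination -hd
  refine h (l^2) ?_
  funext i
  fin_cases i <;> simp [hs1, ht1] <;> ring

lemma cross3 (a b c d e f : ℂ) :
    (![a,b,c] : Fin 3 → ℂ) ⨯₃ ![d,e,f] = ![b*f - c*e, c*d - a*f, a*e - b*d] := by
  rw [cross_apply]; simp

lemma dot3 (a b c d e f : ℂ) :
    (![a,b,c] : Fin 3 → ℂ) ⬝ᵥ ![d,e,f] = a*d + b*e + c*f := by
  simp [dotProduct, Fin.sum_univ_three]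

lemma cross_dot_cross (u v a b : Fin 3 → ℂ) :
    (u ⨯₃ v) ⬝ᵥ (a ⨯₃ b) = (u ⬝ᵥ a) * (v ⬝ᵥ b) - (u ⬝ᵥ b) * (v ⬝ᵥ a) := by
  simp [cross_apply, dotProduct, Fin.sum_univ_three]
  ring

set_option maxHeartbeats 1000000 in
lemma L1_dot_A (sa ta sb tb sc tc sd td se te sf tf : ℂ) :
    pascalVec ![sa^2,sa*ta,ta^2] ![sb^2,sb*tb,tb^2] ![sc^2,sc*tc,tc^2] ![sf^2,sf*tf,tf^2] ![se^2,se*te,te^2] ![sd^2,sd*td,td^2] ⬝ᵥ ![sa^2,sa*ta,ta^2]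
    = -((sa*tb - sb*ta)*(sa*tc - sc*ta)*(sa*td - sd*ta)*(sa*te - se*ta)*(sa*tf - sf*ta)^2*(sb*tf - sf*tb)*(sc*tf - sf*tc)*(sd*te - se*td)) := by
  simp only [pascalVec, chX1, chX2]
  rw [cross3, cross3, cross3, cross3, cross3, cross3, cross3, dot3]
  ring

set_option maxHeartbeats 1000000 in
lemma L1_dot_B (sa ta sb tb sc tc sd td se te sf tf : ℂ) :
    pascalVec ![sa^2,sa*ta,ta^2] ![sb^2,sb*tb,tb^2] ![sc^2,sc*tc,tc^2] ![sf^2,sf*tf,tf^2] ![se^2,se*te,te^2] ![sd^2,sd*td,td^2] ⬝ᵥ ![sb^2,sb*tb,tb^2]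
    = -((sa*tb - sb*ta)*(sa*td - sd*ta)*(sa*te - se*ta)*(sa*tf - sf*ta)*(sb*tc - sc*tb)*(sb*te - se*tb)*(sb*tf - sf*tb)*(sc*tf - sf*tc)*(sd*tf - sf*td)) := by
  simp only [pascalVec, chX1, chX2]
  rw [cross3, cross3, cross3, cross3, cross3, cross3, cross3, dot3]
  ring

set_option maxHeartbeats 1000000 in
lemma L2_dot_A (sa ta sb tb sc tc sd td se te sf tf : ℂ) :
    pascalVec ![sa^2,sa*ta,ta^2] ![sd^2,sd*td,td^2] ![sf^2,sf*tf,tf^2] ![sc^2,sc*tc,tc^2] ![se^2,se*te,te^2] ![sb^2,sb*tb,tb^2] ⬝ᵥ ![sa^2,sa*ta,ta^2]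
    = -((sa*tb - sb*ta)*(sa*tc - sc*ta)^2*(sa*td - sd*ta)*(sa*te - se*ta)*(sa*tf - sf*ta)*(sb*te - se*tb)*(sc*td - sd*tc)*(sc*tf - sf*tc)) := by
  simp only [pascalVec, chX1, chX2]
  rw [cross3, cross3, cross3, cross3, cross3, cross3, cross3, dot3]
  ring

set_option maxHeartbeats 1000000 in
lemma L2_dot_B (sa ta sb tb sc tc sd td se te sf tf : ℂ) :
    pascalVec ![sa^2,sa*ta,ta^2] ![sd^2,sd*td,td^2] ![sf^2,sf*tf,tf^2] ![sc^2,sc*tc,tc^2] ![se^2,se*te,te^2] ![sb^2,sb*tb,tb^2] ⬝ᵥ ![sb^2,sb*tb,tb^2]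
    = -((sa*tb - sb*ta)*(sa*tc - sc*ta)*(sa*td - sd*ta)*(sa*te - se*ta)*(sb*tc - sc*tb)*(sb*te - se*tb)*(sb*tf - sf*tb)*(sc*td - sd*tc)*(sc*tf - sf*tc)) := by
  simp only [pascalVec, chX1, chX2]
  rw [cross3, cross3, cross3, cross3, cross3, cross3, cross3, dot3]
  ring

lemma combine (ab ac ad ae af bc bd be bf cd cf de df ef : ℂ)
    (h : bf*de - be*df = -(bd*ef)) :
    (-(ab*ac*ad*ae*af^2*bf*cf*de)) * (-(ab*ac*ad*ae*bc*be*bf*cd*cf))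
      - (-(ab*ad*ae*af*bc*be*bf*cf*df)) * (-(ab*ac^2*ad*ae*af*be*cd*cf))
    = -(ab^2*ac^2*ad^2*ae^2*af^2*bc*bd*be*bf*cd*cf^2*ef) := by
  linear_combination (ab^2*ac^2*ad^2*ae^2*af^2*bc*be*bf*cd*cf^2) * h

set_option maxHeartbeats 1000000 in
lemma key_identity (sa ta sb tb sc tc sd td se te sf tf : ℂ) :
    (pascalVec ![sa^2,sa*ta,ta^2] ![sb^2,sb*tb,tb^2] ![sc^2,sc*tc,tc^2] ![sf^2,sf*tf,tf^2] ![se^2,se*te,te^2] ![sd^2,sd*td,td^2]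
      ⨯₃ pascalVec ![sa^2,sa*ta,ta^2] ![sd^2,sd*td,td^2] ![sf^2,sf*tf,tf^2] ![sc^2,sc*tc,tc^2] ![se^2,se*te,te^2] ![sb^2,sb*tb,tb^2])
      ⬝ᵥ (![sa^2,sa*ta,ta^2] ⨯₃ ![sb^2,sb*tb,tb^2])
    = -((sa*tb - sb*ta)^2*(sa*tc - sc*ta)^2*(sa*td - sd*ta)^2*(sa*te - se*ta)^2*(sa*tf - sf*ta)^2*(sb*tc - sc*tb)*(sb*td - sd*tb)*(sb*te - se*tb)*(sb*tf - sf*tb)*(sc*td - sd*tc)*(sc*tf - sf*tc)^2*(se*tf - sf*te)) := by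
  rw [cross_dot_cross, L1_dot_A, L1_dot_B, L2_dot_A, L2_dot_B]
  exact combine _ _ _ _ _ _ _ _ _ _ _ _ _ _ (by ring)

theorem pascals_never_coincide_I2
    (A B C D E F : Fin 3 → ℂ)
    (hdist : PairwiseNonProp ![A, B, C, D, E, F])
    (hKA : OnK A) (hKB : OnK B) (hKC : OnK C)
    (hKD : OnK D) (hKE : OnK E) (hKF : OnK F) :
    pascalVec A B C F E D ⨯₃ pascalVec A D F C E B ≠ 0 := by
  obtain ⟨sa, ta, hA⟩ := onk_param A hKA
  obtain ⟨sb, tb, hB⟩ := onk_param B hKB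
  obtain ⟨sc, tc, hC⟩ := onk_param C hKC
  obtain ⟨sd, td, hD⟩ := onk_param D hKD
  obtain ⟨se, te, hE⟩ := onk_param E hKE
  obtain ⟨sf, tf, hF⟩ := onk_param F hKF
  subst hA hB hC hD hE hF
  have hdab : sa*tb - sb*ta ≠ 0 := by
    refine d_ne _ _ _ _ (fun c => hdist 0 1 (by decide) c) ?_
    rintro ⟨h1, h2⟩
    apply hdist 1 0 (by decide) 0
    show (![sb^2,sb*tb,tb^2] : Fin 3 → ℂ) = (0:ℂ) • (![sa^2,sa*ta,ta^2] : Fin 3 → ℂ)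
    funext k
    fin_cases k <;> simp [h1, h2]
  have hdac : sa*tc - sc*ta ≠ 0 := by
    refine d_ne _ _ _ _ (fun c => hdist 0 2 (by decide) c) ?_
    rintro ⟨h1, h2⟩
    apply hdist 2 0 (by decide) 0
    show (![sc^2,sc*tc,tc^2] : Fin 3 → ℂ) = (0:ℂ) • (![sa^2,sa*ta,ta^2] : Fin 3 → ℂ)
    funext k
    fin_cases k <;> simp [h1, h2]
  have hdad : sa*td - sd*ta ≠ 0 := by
    refine d_ne _ _ _ _ (fun c => hdist 0 3 (by decide) c) ?_
    rintro ⟨h1, h2⟩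
    apply hdist 3 0 (by decide) 0
    show (![sd^2,sd*td,td^2] : Fin 3 → ℂ) = (0:ℂ) • (![sa^2,sa*ta,ta^2] : Fin 3 → ℂ)
    funext k
    fin_cases k <;> simp [h1, h2]
  have hdae : sa*te - se*ta ≠ 0 := by
    refine d_ne _ _ _ _ (fun c => hdist 0 4 (by decide) c) ?_
    rintro ⟨h1, h2⟩
    apply hdist 4 0 (by decide) 0
    show (![se^2,se*te,te^2] : Fin 3 → ℂ) = (0:ℂ) • (![sa^2,sa*ta,ta^2] : Fin 3 → ℂ)
    funext k
    fin_cases k <;> simp [h1, h2]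
  have hdaf : sa*tf - sf*ta ≠ 0 := by
    refine d_ne _ _ _ _ (fun c => hdist 0 5 (by decide) c) ?_
    rintro ⟨h1, h2⟩
    apply hdist 5 0 (by decide) 0
    show (![sf^2,sf*tf,tf^2] : Fin 3 → ℂ) = (0:ℂ) • (![sa^2,sa*ta,ta^2] : Fin 3 → ℂ)
    funext k
    fin_cases k <;> simp [h1, h2]
  have hdbc : sb*tc - sc*tb ≠ 0 := by
    refine d_ne _ _ _ _ (fun c => hdist 1 2 (by decide) c) ?_
    rintro ⟨h1, h2⟩
    apply hdist 2 1 (by decide) 0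
    show (![sc^2,sc*tc,tc^2] : Fin 3 → ℂ) = (0:ℂ) • (![sb^2,sb*tb,tb^2] : Fin 3 → ℂ)
    funext k
    fin_cases k <;> simp [h1, h2]
  have hdbd : sb*td - sd*tb ≠ 0 := by
    refine d_ne _ _ _ _ (fun c => hdist 1 3 (by decide) c) ?_
    rintro ⟨h1, h2⟩
    apply hdist 3 1 (by decide) 0
    show (![sd^2,sd*td,td^2] : Fin 3 → ℂ) = (0:ℂ) • (![sb^2,sb*tb,tb^2] : Fin 3 → ℂ)
    funext k
    fin_cases k <;> simp [h1, h2]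
  have hdbe : sb*te - se*tb ≠ 0 := by
    refine d_ne _ _ _ _ (fun c => hdist 1 4 (by decide) c) ?_
    rintro ⟨h1, h2⟩
    apply hdist 4 1 (by decide) 0
    show (![se^2,se*te,te^2] : Fin 3 → ℂ) = (0:ℂ) • (![sb^2,sb*tb,tb^2] : Fin 3 → ℂ)
    funext k
    fin_cases k <;> simp [h1, h2]
  have hdbf : sb*tf - sf*tb ≠ 0 := by
    refine d_ne _ _ _ _ (fun c => hdist 1 5 (by decide) c) ?_
    rintro ⟨h1, h2⟩
    apply hdist 5 1 (by decide) 0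
    show (![sf^2,sf*tf,tf^2] : Fin 3 → ℂ) = (0:ℂ) • (![sb^2,sb*tb,tb^2] : Fin 3 → ℂ)
    funext k
    fin_cases k <;> simp [h1, h2]
  have hdcd : sc*td - sd*tc ≠ 0 := by
    refine d_ne _ _ _ _ (fun c => hdist 2 3 (by decide) c) ?_
    rintro ⟨h1, h2⟩
    apply hdist 3 2 (by decide) 0
    show (![sd^2,sd*td,td^2] : Fin 3 → ℂ) = (0:ℂ) • (![sc^2,sc*tc,tc^2] : Fin 3 → ℂ)
    funext k
    fin_cases k <;> simp [h1, h2]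
  have hdcf : sc*tf - sf*tc ≠ 0 := by
    refine d_ne _ _ _ _ (fun c => hdist 2 5 (by decide) c) ?_
    rintro ⟨h1, h2⟩
    apply hdist 5 2 (by decide) 0
    show (![sf^2,sf*tf,tf^2] : Fin 3 → ℂ) = (0:ℂ) • (![sc^2,sc*tc,tc^2] : Fin 3 → ℂ)
    funext k
    fin_cases k <;> simp [h1, h2]
  have hdef : se*tf - sf*te ≠ 0 := by
    refine d_ne _ _ _ _ (fun c => hdist 4 5 (by decide) c) ?_
    rintro ⟨h1, h2⟩
    apply hdist 5 4 (by decide) 0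
    show (![sf^2,sf*tf,tf^2] : Fin 3 → ℂ) = (0:ℂ) • (![se^2,se*te,te^2] : Fin 3 → ℂ)
    funext k
    fin_cases k <;> simp [h1, h2]
  intro hzero
  have hdot : (pascalVec ![sa^2,sa*ta,ta^2] ![sb^2,sb*tb,tb^2] ![sc^2,sc*tc,tc^2] ![sf^2,sf*tf,tf^2] ![se^2,se*te,te^2] ![sd^2,sd*td,td^2]
      ⨯₃ pascalVec ![sa^2,sa*ta,ta^2] ![sd^2,sd*td,td^2] ![sf^2,sf*tf,tf^2] ![sc^2,sc*tc,tc^2] ![se^2,se*te,te^2] ![sb^2,sb*tb,tb^2])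
      ⬝ᵥ (![sa^2,sa*ta,ta^2] ⨯₃ ![sb^2,sb*tb,tb^2]) = 0 := by
    rw [hzero]; exact zero_dotProduct _
  rw [key_identity] at hdot
  apply neg_ne_zero.mpr ?_ hdot
  exact mul_ne_zero (mul_ne_zero (mul_ne_zero (mul_ne_zero (mul_ne_zero (mul_ne_zero
    (mul_ne_zero (mul_ne_zero (mul_ne_zero (mul_ne_zero (mul_ne_zero
    (pow_ne_zero 2 hdab) (pow_ne_zero 2 hdac)) (pow_ne_zero 2 hdad))
    (pow_ne_zero 2 hdae)) (pow_ne_zero 2 hdaf)) hdbc) hdbd) hdbe) hdbf) hdcd)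
    (pow_ne_zero 2 hdcf)) hdef

end

end PascalStmt
end

section
/- Let A, B, C, D, E, F be six pairwise non-proportional points of the conic K. If the Pascal lines of the arrays [[A,B,C],[F,E,D]] and [[A,B,D],[F,E,C]] coincide (the cross product of their Pascal vectors is zero), then the three chords AF, BE, CD are concurrent, i.e. det[(A×F), (B×E), (C×D)] = 0 (the six points are in involution). -/
open Matrix

namespace PascalStmt

noncomputable section

lemma cross_smul_left (r : ℂ) (u v : Fin 3 → ℂ) : (r • u) ⨯₃ v = r • (u ⨯₃ v) := by
  rw [LinearMap.map_smul, LinearMap.smul_apply]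

lemma cross_smul_right (r : ℂ) (u v : Fin 3 → ℂ) : u ⨯₃ (r • v) = r • (u ⨯₃ v) :=
  map_smul (crossProduct u) r v

lemma pascal_smul (a b c d e f : ℂ) (P₁ P₂ P₃ P₄ P₅ P₆ : Fin 3 → ℂ) :
    pascalVec (a • P₁) (b • P₂) (c • P₃) (d • P₄) (e • P₅) (f • P₆)
      = (a^2*b*c*d^2*e*f) • pascalVec P₁ P₂ P₃ P₄ P₅ P₆ := by
  simp only [pascalVec, chX1, chX2, cross_smul_left, cross_smul_right, smul_smul]
  congr 1
  ring

lemma param_of (P : Fin 3 → ℂ) (hK : OnK P) (hP : P ≠ 0) :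
    ∃ c s t : ℂ, c ≠ 0 ∧ (s ≠ 0 ∨ t ≠ 0) ∧ P = c • ![s^2, s*t, t^2] := by
  by_cases h0 : P 0 = 0
  · have h1 : P 1 = 0 := by
      have := hK; rw [OnK, h0, zero_mul] at this
      exact pow_eq_zero_iff (n := 2) (by norm_num) |>.mp this.symm
    have h2 : P 2 ≠ 0 := by
      intro h2
      apply hP; funext i; fin_cases i <;> simp [h0, h1, h2]
    exact ⟨P 2, 0, 1, h2, Or.inr one_ne_zero, by
      funext i; fin_cases i <;> simp [h0, h1]⟩
  · refine ⟨(P 0)⁻¹, P 0, P 1, inv_ne_zero h0, Or.inl h0, ?_⟩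
    have hK' : P 0 * P 2 = P 1 ^ 2 := hK
    funext i; fin_cases i <;> simp [Pi.smul_apply, smul_eq_mul] <;> field_simp
    · linear_combination hK'

lemma delta_ne_zero (c c' s t s' t' : ℂ) (hc : c ≠ 0) (hc' : c' ≠ 0)
    (hst : s ≠ 0 ∨ t ≠ 0) (hst' : s' ≠ 0 ∨ t' ≠ 0)
    (h : ∀ k : ℂ, c • ![s^2, s*t, t^2] ≠ k • (c' • ![s'^2, s'*t', t'^2])) :
    s * t' - s' * t ≠ 0 := by
  intro hΔ
  by_cases hs' : s' = 0
  · have ht' : t' ≠ 0 := hst'.resolve_left (fun h => h hs')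
    have hs : s = 0 := by
      have : s * t' = 0 := by linear_combination hΔ + t * hs'
      exact (mul_eq_zero.mp this).resolve_right ht'
    have ht : t ≠ 0 := hst.resolve_left (fun h => h hs)
    apply h (c * t^2 / (c' * t'^2))
    funext i; fin_cases i <;> simp [Pi.smul_apply, smul_eq_mul, hs, hs'] <;> field_simp
  · have hs : s ≠ 0 := by
      intro hs
      have : s' * t = 0 := by linear_combination -hΔ + t' * hs
      exact hst.resolve_left (fun h => h hs) ((mul_eq_zero.mp this).resolve_left hs')
    apply h (c * s^2 / (c' * s'^2))
    funext i; fin_cases i <;> simp [Pi.smul_apply, smul_eq_mul] <;> field_simp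
    · linear_combination (-1) * hΔ
    · linear_combination (-(s*t'+s'*t)) * hΔ

set_option maxHeartbeats 2000000 in
theorem coincide_implies_involution_I9
    (A B C D E F : Fin 3 → ℂ)
    (hdist : PairwiseNonProp ![A, B, C, D, E, F])
    (hKA : OnK A) (hKB : OnK B) (hKC : OnK C)
    (hKD : OnK D) (hKE : OnK E) (hKF : OnK F)
    (hcoin : pascalVec A B C F E D ⨯₃ pascalVec A B D F E C = 0) :
    (Matrix.of ![A ⨯₃ F, B ⨯₃ E, C ⨯₃ D]).det = 0 := by
  have hA0 : A ≠ 0 := by have := hdist 0 1 (by decide) 0; simpa using this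
  have hB0 : B ≠ 0 := by have := hdist 1 0 (by decide) 0; simpa using this
  have hC0 : C ≠ 0 := by have := hdist 2 0 (by decide) 0; simpa using this
  have hD0 : D ≠ 0 := by have := hdist 3 0 (by decide) 0; simpa using this
  have hE0 : E ≠ 0 := by have := hdist 4 0 (by decide) 0; simpa using this
  have hF0 : F ≠ 0 := by have := hdist 5 0 (by decide) 0; simpa using this
  obtain ⟨ca, sa, ta, hca, hsta, rfl⟩ := param_of A hKA hA0
  obtain ⟨cb, sb, tb, hcb, hstb, rfl⟩ := param_of B hKB hB0
  obtain ⟨cc, sc, tc, hcc, hstc, rfl⟩ := param_of C hKC hC0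
  obtain ⟨cd, sd, td, hcd, hstd, rfl⟩ := param_of D hKD hD0
  obtain ⟨ce, se, te, hce, hste, rfl⟩ := param_of E hKE hE0
  obtain ⟨cf, sf, tf, hcf, hstf, rfl⟩ := param_of F hKF hF0
  have hdAD : sa * td - sd * ta ≠ 0 :=
    delta_ne_zero ca cd sa ta sd td hca hcd hsta hstd
      (fun k => by have := hdist 0 3 (by decide) k; simpa using this)
  have hdAE : sa * te - se * ta ≠ 0 :=
    delta_ne_zero ca ce sa ta se te hca hce hsta hste
      (fun k => by have := hdist 0 4 (by decide) k; simpa using this)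
  have hdAF' : sf * ta - sa * tf ≠ 0 :=
    delta_ne_zero cf ca sf tf sa ta hcf hca hstf hsta
      (fun k => by have := hdist 5 0 (by decide) k; simpa using this)
  have hdAF : sa * tf - sf * ta ≠ 0 := fun h => hdAF' (by linear_combination -h)
  have hdBF' : sf * tb - sb * tf ≠ 0 :=
    delta_ne_zero cf cb sf tf sb tb hcf hcb hstf hstb
      (fun k => by have := hdist 5 1 (by decide) k; simpa using this)
  have hdBF : sb * tf - sf * tb ≠ 0 := fun h => hdBF' (by linear_combination -h)
  have hdCF' : sf * tc - sc * tf ≠ 0 :=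
    delta_ne_zero cf cc sf tf sc tc hcf hcc hstf hstc
      (fun k => by have := hdist 5 2 (by decide) k; simpa using this)
  have hdCF : sc * tf - sf * tc ≠ 0 := fun h => hdCF' (by linear_combination -h)
  have hdAC : sa * tc - sc * ta ≠ 0 :=
    delta_ne_zero ca cc sa ta sc tc hca hcc hsta hstc
      (fun k => by have := hdist 0 2 (by decide) k; simpa using this)
  have hdDF' : sf * td - sd * tf ≠ 0 :=
    delta_ne_zero cf cd sf tf sd td hcf hcd hstf hstd
      (fun k => by have := hdist 5 3 (by decide) k; simpa using this)
  have hdDF : sd * tf - sf * td ≠ 0 := fun h => hdDF' (by linear_combination -h)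
  have hdCD : sc * td - sd * tc ≠ 0 :=
    delta_ne_zero cc cd sc tc sd td hcc hcd hstc hstd
      (fun k => by have := hdist 2 3 (by decide) k; simpa using this)
  have hdAB : sa * tb - sb * ta ≠ 0 :=
    delta_ne_zero ca cb sa ta sb tb hca hcb hsta hstb
      (fun k => by have := hdist 0 1 (by decide) k; simpa using this)
  have p10 : (pascalVec ![sa^2, sa*ta, ta^2] ![sb^2, sb*tb, tb^2] ![sc^2, sc*tc, tc^2] ![sf^2, sf*tf, tf^2] ![se^2, se*te, te^2] ![sd^2, sd*td, td^2]) 0 = ((sa*td - sd*ta) * ((sa*te - se*ta) * ((sa*tf - sf*ta) * ((sb*tf - sf*tb) * (sc*tf - sf*tc))))) * (-sa*tb*tc*sd*te*tf + sa*tb*tc*td*se*tf + ta*sb*tc*sd*te*tf - ta*sb*tc*td*te*sf - ta*tb*sc*td*se*tf + ta*tb*sc*td*te*sf) := by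
    simp only [pascalVec, chX1, chX2, cross_apply, Matrix.cons_val_zero, Matrix.cons_val_one, Matrix.head_cons, Matrix.cons_val_two, Matrix.tail_cons, Fin.isValue]
    ring
  have p20 : (pascalVec ![sa^2, sa*ta, ta^2] ![sb^2, sb*tb, tb^2] ![sd^2, sd*td, td^2] ![sf^2, sf*tf, tf^2] ![se^2, se*te, te^2] ![sc^2, sc*tc, tc^2]) 0 = ((sa*tc - sc*ta) * ((sa*te - se*ta) * ((sa*tf - sf*ta) * ((sb*tf - sf*tb) * (sd*tf - sf*td))))) * (-sa*tb*sc*td*te*tf + sa*tb*tc*td*se*tf + ta*sb*sc*td*te*tf - ta*sb*tc*td*te*sf - ta*tb*tc*sd*se*tf + ta*tb*tc*sd*te*sf) := by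
    simp only [pascalVec, chX1, chX2, cross_apply, Matrix.cons_val_zero, Matrix.cons_val_one, Matrix.head_cons, Matrix.cons_val_two, Matrix.tail_cons, Fin.isValue]
    ring
  have p11 : (pascalVec ![sa^2, sa*ta, ta^2] ![sb^2, sb*tb, tb^2] ![sc^2, sc*tc, tc^2] ![sf^2, sf*tf, tf^2] ![se^2, se*te, te^2] ![sd^2, sd*td, td^2]) 1 = ((sa*td - sd*ta) * ((sa*te - se*ta) * ((sa*tf - sf*ta) * ((sb*tf - sf*tb) * (sc*tf - sf*tc))))) * (-sa*sb*tc*td*se*tf + sa*sb*tc*td*te*sf + sa*tb*sc*sd*te*tf - sa*tb*sc*td*te*sf + sa*tb*tc*sd*te*sf - sa*tb*tc*td*se*sf - ta*sb*sc*sd*te*tf + ta*sb*sc*td*se*tf - ta*sb*tc*sd*se*tf + ta*sb*tc*td*se*sf + ta*tb*sc*sd*se*tf - ta*tb*sc*sd*te*sf) := by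
    simp only [pascalVec, chX1, chX2, cross_apply, Matrix.cons_val_zero, Matrix.cons_val_one, Matrix.head_cons, Matrix.cons_val_two, Matrix.tail_cons, Fin.isValue]
    ring
  have p21 : (pascalVec ![sa^2, sa*ta, ta^2] ![sb^2, sb*tb, tb^2] ![sd^2, sd*td, td^2] ![sf^2, sf*tf, tf^2] ![se^2, se*te, te^2] ![sc^2, sc*tc, tc^2]) 1 = ((sa*tc - sc*ta) * ((sa*te - se*ta) * ((sa*tf - sf*ta) * ((sb*tf - sf*tb) * (sd*tf - sf*td))))) * (-sa*sb*tc*td*se*tf + sa*sb*tc*td*te*sf + sa*tb*sc*sd*te*tf + sa*tb*sc*td*te*sf - sa*tb*tc*sd*te*sf - sa*tb*tc*td*se*sf - ta*sb*sc*sd*te*tf - ta*sb*sc*td*se*tf + ta*sb*tc*sd*se*tf + ta*sb*tc*td*se*sf + ta*tb*sc*sd*se*tf - ta*tb*sc*sd*te*sf) := by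
    simp only [pascalVec, chX1, chX2, cross_apply, Matrix.cons_val_zero, Matrix.cons_val_one, Matrix.head_cons, Matrix.cons_val_two, Matrix.tail_cons, Fin.isValue]
    ring
  have p12 : (pascalVec ![sa^2, sa*ta, ta^2] ![sb^2, sb*tb, tb^2] ![sc^2, sc*tc, tc^2] ![sf^2, sf*tf, tf^2] ![se^2, se*te, te^2] ![sd^2, sd*td, td^2]) 2 = ((sa*td - sd*ta) * ((sa*te - se*ta) * ((sa*tf - sf*ta) * ((sb*tf - sf*tb) * (sc*tf - sf*tc))))) * (sa*sb*tc*sd*se*tf - sa*sb*tc*sd*te*sf - sa*tb*sc*sd*se*tf + sa*tb*sc*td*se*sf + ta*sb*sc*sd*te*sf - ta*sb*sc*td*se*sf) := by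
    simp only [pascalVec, chX1, chX2, cross_apply, Matrix.cons_val_zero, Matrix.cons_val_one, Matrix.head_cons, Matrix.cons_val_two, Matrix.tail_cons, Fin.isValue]
    ring
  have p22 : (pascalVec ![sa^2, sa*ta, ta^2] ![sb^2, sb*tb, tb^2] ![sd^2, sd*td, td^2] ![sf^2, sf*tf, tf^2] ![se^2, se*te, te^2] ![sc^2, sc*tc, tc^2]) 2 = ((sa*tc - sc*ta) * ((sa*te - se*ta) * ((sa*tf - sf*ta) * ((sb*tf - sf*tb) * (sd*tf - sf*td))))) * (sa*sb*sc*td*se*tf - sa*sb*sc*td*te*sf - sa*tb*sc*sd*se*tf + sa*tb*tc*sd*se*sf + ta*sb*sc*sd*te*sf - ta*sb*tc*sd*se*sf) := by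
    simp only [pascalVec, chX1, chX2, cross_apply, Matrix.cons_val_zero, Matrix.cons_val_one, Matrix.head_cons, Matrix.cons_val_two, Matrix.tail_cons, Fin.isValue]
    ring
  rw [pascal_smul, pascal_smul, cross_smul_left, cross_smul_right, smul_smul] at hcoin
  have hPQ : (pascalVec ![sa^2, sa*ta, ta^2] ![sb^2, sb*tb, tb^2] ![sc^2, sc*tc, tc^2] ![sf^2, sf*tf, tf^2] ![se^2, se*te, te^2] ![sd^2, sd*td, td^2]) ⨯₃ (pascalVec ![sa^2, sa*ta, ta^2] ![sb^2, sb*tb, tb^2] ![sd^2, sd*td, td^2] ![sf^2, sf*tf, tf^2] ![se^2, se*te, te^2] ![sc^2, sc*tc, tc^2]) = 0 := by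
    refine (smul_eq_zero.mp hcoin).resolve_left (mul_ne_zero ?_ ?_)
    · exact mul_ne_zero (mul_ne_zero (mul_ne_zero (mul_ne_zero (mul_ne_zero
        (pow_ne_zero 2 hca) hcb) hcc) (pow_ne_zero 2 hcf)) hce) hcd
    · exact mul_ne_zero (mul_ne_zero (mul_ne_zero (mul_ne_zero (mul_ne_zero
        (pow_ne_zero 2 hca) hcb) hcd) (pow_ne_zero 2 hcf)) hce) hcc
  have hGG : (((sa*td - sd*ta) * ((sa*te - se*ta) * ((sa*tf - sf*ta) * ((sb*tf - sf*tb) * (sc*tf - sf*tc)))))) * (((sa*tc - sc*ta) * ((sa*te - se*ta) * ((sa*tf - sf*ta) * ((sb*tf - sf*tb) * (sd*tf - sf*td)))))) ≠ 0 :=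
    mul_ne_zero
      (mul_ne_zero hdAD (mul_ne_zero hdAE (mul_ne_zero hdAF (mul_ne_zero hdBF hdCF))))
      (mul_ne_zero hdAC (mul_ne_zero hdAE (mul_ne_zero hdAF (mul_ne_zero hdBF hdDF))))
  have e0 := congrFun hPQ 0
  have e1 := congrFun hPQ 1
  have e2 := congrFun hPQ 2
  rw [cross_apply] at e0 e1 e2
  simp only [Matrix.cons_val_zero, Matrix.cons_val_one, Matrix.head_cons, Matrix.cons_val_two,
    Matrix.tail_cons, Pi.zero_apply, Fin.isValue] at e0 e1 e2
  rw [p11, p12, p22, p21,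
    mul_mul_mul_comm ((sa*td - sd*ta) * ((sa*te - se*ta) * ((sa*tf - sf*ta) * ((sb*tf - sf*tb) * (sc*tf - sf*tc))))) (-sa*sb*tc*td*se*tf + sa*sb*tc*td*te*sf + sa*tb*sc*sd*te*tf - sa*tb*sc*td*te*sf + sa*tb*tc*sd*te*sf - sa*tb*tc*td*se*sf - ta*sb*sc*sd*te*tf + ta*sb*sc*td*se*tf - ta*sb*tc*sd*se*tf + ta*sb*tc*td*se*sf + ta*tb*sc*sd*se*tf - ta*tb*sc*sd*te*sf) ((sa*tc - sc*ta) * ((sa*te - se*ta) * ((sa*tf - sf*ta) * ((sb*tf - sf*tb) * (sd*tf - sf*td))))) (sa*sb*sc*td*se*tf - sa*sb*sc*td*te*sf - sa*tb*sc*sd*se*tf + sa*tb*tc*sd*se*sf + ta*sb*sc*sd*te*sf - ta*sb*tc*sd*se*sf),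
    mul_mul_mul_comm ((sa*td - sd*ta) * ((sa*te - se*ta) * ((sa*tf - sf*ta) * ((sb*tf - sf*tb) * (sc*tf - sf*tc))))) (sa*sb*tc*sd*se*tf - sa*sb*tc*sd*te*sf - sa*tb*sc*sd*se*tf + sa*tb*sc*td*se*sf + ta*sb*sc*sd*te*sf - ta*sb*sc*td*se*sf) ((sa*tc - sc*ta) * ((sa*te - se*ta) * ((sa*tf - sf*ta) * ((sb*tf - sf*tb) * (sd*tf - sf*td))))) (-sa*sb*tc*td*se*tf + sa*sb*tc*td*te*sf + sa*tb*sc*sd*te*tf + sa*tb*sc*td*te*sf - sa*tb*tc*sd*te*sf - sa*tb*tc*td*se*sf - ta*sb*sc*sd*te*tf - ta*sb*sc*td*se*tf + ta*sb*tc*sd*se*tf + ta*sb*tc*td*se*sf + ta*tb*sc*sd*se*tf - ta*tb*sc*sd*te*sf), ← mul_sub] at e0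
  rw [p12, p10, p20, p22,
    mul_mul_mul_comm ((sa*td - sd*ta) * ((sa*te - se*ta) * ((sa*tf - sf*ta) * ((sb*tf - sf*tb) * (sc*tf - sf*tc))))) (sa*sb*tc*sd*se*tf - sa*sb*tc*sd*te*sf - sa*tb*sc*sd*se*tf + sa*tb*sc*td*se*sf + ta*sb*sc*sd*te*sf - ta*sb*sc*td*se*sf) ((sa*tc - sc*ta) * ((sa*te - se*ta) * ((sa*tf - sf*ta) * ((sb*tf - sf*tb) * (sd*tf - sf*td))))) (-sa*tb*sc*td*te*tf + sa*tb*tc*td*se*tf + ta*sb*sc*td*te*tf - ta*sb*tc*td*te*sf - ta*tb*tc*sd*se*tf + ta*tb*tc*sd*te*sf),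
    mul_mul_mul_comm ((sa*td - sd*ta) * ((sa*te - se*ta) * ((sa*tf - sf*ta) * ((sb*tf - sf*tb) * (sc*tf - sf*tc))))) (-sa*tb*tc*sd*te*tf + sa*tb*tc*td*se*tf + ta*sb*tc*sd*te*tf - ta*sb*tc*td*te*sf - ta*tb*sc*td*se*tf + ta*tb*sc*td*te*sf) ((sa*tc - sc*ta) * ((sa*te - se*ta) * ((sa*tf - sf*ta) * ((sb*tf - sf*tb) * (sd*tf - sf*td))))) (sa*sb*sc*td*se*tf - sa*sb*sc*td*te*sf - sa*tb*sc*sd*se*tf + sa*tb*tc*sd*se*sf + ta*sb*sc*sd*te*sf - ta*sb*tc*sd*se*sf), ← mul_sub] at e1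
  rw [p10, p11, p21, p20,
    mul_mul_mul_comm ((sa*td - sd*ta) * ((sa*te - se*ta) * ((sa*tf - sf*ta) * ((sb*tf - sf*tb) * (sc*tf - sf*tc))))) (-sa*tb*tc*sd*te*tf + sa*tb*tc*td*se*tf + ta*sb*tc*sd*te*tf - ta*sb*tc*td*te*sf - ta*tb*sc*td*se*tf + ta*tb*sc*td*te*sf) ((sa*tc - sc*ta) * ((sa*te - se*ta) * ((sa*tf - sf*ta) * ((sb*tf - sf*tb) * (sd*tf - sf*td))))) (-sa*sb*tc*td*se*tf + sa*sb*tc*td*te*sf + sa*tb*sc*sd*te*tf + sa*tb*sc*td*te*sf - sa*tb*tc*sd*te*sf - sa*tb*tc*td*se*sf - ta*sb*sc*sd*te*tf - ta*sb*sc*td*se*tf + ta*sb*tc*sd*se*tf + ta*sb*tc*td*se*sf + ta*tb*sc*sd*se*tf - ta*tb*sc*sd*te*sf),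
    mul_mul_mul_comm ((sa*td - sd*ta) * ((sa*te - se*ta) * ((sa*tf - sf*ta) * ((sb*tf - sf*tb) * (sc*tf - sf*tc))))) (-sa*sb*tc*td*se*tf + sa*sb*tc*td*te*sf + sa*tb*sc*sd*te*tf - sa*tb*sc*td*te*sf + sa*tb*tc*sd*te*sf - sa*tb*tc*td*se*sf - ta*sb*sc*sd*te*tf + ta*sb*sc*td*se*tf - ta*sb*tc*sd*se*tf + ta*sb*tc*td*se*sf + ta*tb*sc*sd*se*tf - ta*tb*sc*sd*te*sf) ((sa*tc - sc*ta) * ((sa*te - se*ta) * ((sa*tf - sf*ta) * ((sb*tf - sf*tb) * (sd*tf - sf*td))))) (-sa*tb*sc*td*te*tf + sa*tb*tc*td*se*tf + ta*sb*sc*td*te*tf - ta*sb*tc*td*te*sf - ta*tb*tc*sd*se*tf + ta*tb*tc*sd*te*sf), ← mul_sub] at e2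
  replace e0 := (mul_eq_zero.mp e0).resolve_left hGG
  replace e1 := (mul_eq_zero.mp e1).resolve_left hGG
  replace e2 := (mul_eq_zero.mp e2).resolve_left hGG
  have hI0 : (sc * td - sd * tc) * ((-(sa*sb*tc*td*se*tf) + sa*sb*tc*td*te*sf + sa*tb*sc*sd*te*tf - sa*tb*sc*td*te*sf - sa*tb*tc*sd*te*sf + sa*tb*tc*td*se*sf - ta*sb*sc*sd*te*tf + ta*sb*sc*td*se*tf + ta*sb*tc*sd*se*tf - ta*sb*tc*td*se*sf - ta*tb*sc*sd*se*tf + ta*tb*sc*sd*te*sf) * (sa*sb*(se*tf-te*sf)+se*sf*(sa*tb-ta*sb))) = 0 := by linear_combination e0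
  have hI1 : (sc * td - sd * tc) * ((-(sa*sb*tc*td*se*tf) + sa*sb*tc*td*te*sf + sa*tb*sc*sd*te*tf - sa*tb*sc*td*te*sf - sa*tb*tc*sd*te*sf + sa*tb*tc*td*se*sf - ta*sb*sc*sd*te*tf + ta*sb*sc*td*se*tf + ta*sb*tc*sd*se*tf - ta*sb*tc*td*se*sf - ta*tb*sc*sd*se*tf + ta*tb*sc*sd*te*sf) * (sa*tb*se*tf-ta*sb*te*sf)) = 0 := by linear_combination e1
  have hI2 : (sc * td - sd * tc) * ((-(sa*sb*tc*td*se*tf) + sa*sb*tc*td*te*sf + sa*tb*sc*sd*te*tf - sa*tb*sc*td*te*sf - sa*tb*tc*sd*te*sf + sa*tb*tc*td*se*sf - ta*sb*sc*sd*te*tf + ta*sb*sc*td*se*tf + ta*sb*tc*sd*se*tf - ta*sb*tc*td*se*sf - ta*tb*sc*sd*se*tf + ta*tb*sc*sd*te*sf) * (te*tf*(sa*tb-ta*sb)+ta*tb*(se*tf-te*sf))) = 0 := by linear_combination e2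
  replace hI0 := (mul_eq_zero.mp hI0).resolve_left hdCD
  replace hI1 := (mul_eq_zero.mp hI1).resolve_left hdCD
  replace hI2 := (mul_eq_zero.mp hI2).resolve_left hdCD
  have hu0 : (-(sa*sb*tc*td*se*tf) + sa*sb*tc*td*te*sf + sa*tb*sc*sd*te*tf - sa*tb*sc*td*te*sf - sa*tb*tc*sd*te*sf + sa*tb*tc*td*se*sf - ta*sb*sc*sd*te*tf + ta*sb*sc*td*se*tf + ta*sb*tc*sd*se*tf - ta*sb*tc*td*se*sf - ta*tb*sc*sd*se*tf + ta*tb*sc*sd*te*sf) * (((sa*tb - sb*ta) * (sa*tf - sf*ta)) * (sa*se)) = 0 := by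
    linear_combination sa^2 * hI1 - (sa*ta) * hI0
  have hu1 : (-(sa*sb*tc*td*se*tf) + sa*sb*tc*td*te*sf + sa*tb*sc*sd*te*tf - sa*tb*sc*td*te*sf - sa*tb*tc*sd*te*sf + sa*tb*tc*td*se*sf - ta*sb*sc*sd*te*tf + ta*sb*sc*td*se*tf + ta*sb*tc*sd*se*tf - ta*sb*tc*td*se*sf - ta*tb*sc*sd*se*tf + ta*tb*sc*sd*te*sf) * (((sa*tb - sb*ta) * (sa*tf - sf*ta)) * (sa*te + ta*se)) = 0 := by
    linear_combination sa^2 * hI2 - ta^2 * hI0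
  have hu2 : (-(sa*sb*tc*td*se*tf) + sa*sb*tc*td*te*sf + sa*tb*sc*sd*te*tf - sa*tb*sc*td*te*sf - sa*tb*tc*sd*te*sf + sa*tb*tc*td*se*sf - ta*sb*sc*sd*te*tf + ta*sb*sc*td*se*tf + ta*sb*tc*sd*se*tf - ta*sb*tc*td*se*sf - ta*tb*sc*sd*se*tf + ta*tb*sc*sd*te*sf) * (((sa*tb - sb*ta) * (sa*tf - sf*ta)) * (ta*te)) = 0 := by
    linear_combination (sa*ta) * hI2 - ta^2 * hI1
  have hI : (-(sa*sb*tc*td*se*tf) + sa*sb*tc*td*te*sf + sa*tb*sc*sd*te*tf - sa*tb*sc*td*te*sf - sa*tb*tc*sd*te*sf + sa*tb*tc*td*se*sf - ta*sb*sc*sd*te*tf + ta*sb*sc*td*se*tf + ta*sb*tc*sd*se*tf - ta*sb*tc*td*se*sf - ta*tb*sc*sd*se*tf + ta*tb*sc*sd*te*sf) = 0 := by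
    by_cases hsa : sa = 0
    · have hta : ta ≠ 0 := hsta.resolve_left (fun h => h hsa)
      by_cases hte : te = 0
      · have hse : se ≠ 0 := hste.resolve_right (fun h => h hte)
        refine (mul_eq_zero.mp hu1).resolve_right ?_
        have h1 : sa*te + ta*se = ta*se := by rw [hsa, hte]; ring
        rw [h1]
        exact mul_ne_zero (mul_ne_zero hdAB hdAF) (mul_ne_zero hta hse)
      · exact (mul_eq_zero.mp hu2).resolve_right
          (mul_ne_zero (mul_ne_zero hdAB hdAF) (mul_ne_zero hta hte))
    · by_cases hse : se = 0
      · have hte : te ≠ 0 := hste.resolve_left (fun h => h hse)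
        refine (mul_eq_zero.mp hu1).resolve_right ?_
        have h1 : sa*te + ta*se = sa*te := by rw [hse]; ring
        rw [h1]
        exact mul_ne_zero (mul_ne_zero hdAB hdAF) (mul_ne_zero hsa hte)
      · exact (mul_eq_zero.mp hu0).resolve_right
          (mul_ne_zero (mul_ne_zero hdAB hdAF) (mul_ne_zero hsa hse))
  simp only [Matrix.det_fin_three, Matrix.of_apply, cross_apply, Pi.smul_apply, smul_eq_mul,
    Matrix.cons_val_zero, Matrix.cons_val_one, Matrix.head_cons, Matrix.cons_val_two,
    Matrix.tail_cons, Matrix.cons_val', Matrix.head_fin_const, Matrix.empty_val',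
    Matrix.cons_val_fin_one, Fin.isValue]
  linear_combination (ca*cb*cc*cd*ce*cf*(sa*tf - sf*ta)*(sb*te - se*tb)*(sc*td - sd*tc)) * hI

end

end PascalStmt
end

section
/- Let A, B, C, D, E, F be six pairwise non-proportional points of the conic K. If the Pascal lines of the arrays [[A,B,C],[F,E,D]] and [[A,B,D],[E,C,F]] coincide (the cross product of their Pascal vectors is zero), then the three chords AE, BF, CD are concurrent, i.e. det[(A×E), (B×F), (C×D)] = 0 (the six points are in involution). -/
open Matrix

namespace PascalStmt

noncomputable section

private lemma eta3 (y : Fin 3 → ℂ) : y = ![y 0, y 1, y 2] := by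
  funext i; fin_cases i <;> rfl

private lemma cross3_smul_smul (x y : ℂ) (u v : Fin 3 → ℂ) :
    (x • u) ⨯₃ (y • v) = (x * y) • (u ⨯₃ v) := by
  rw [LinearMap.map_smul₂, (crossProduct u).map_smul, smul_smul]

private lemma pascalVec_smul (c1 c2 c3 c4 c5 c6 : ℂ) (P1 P2 P3 P4 P5 P6 : Fin 3 → ℂ) :
    pascalVec (c1 • P1) (c2 • P2) (c3 • P3) (c4 • P4) (c5 • P5) (c6 • P6)
      = (c1 ^ 2 * c2 * c3 * c4 ^ 2 * c5 * c6) • pascalVec P1 P2 P3 P4 P5 P6 := by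
  simp only [pascalVec, chX1, chX2, cross3_smul_smul, smul_smul]
  congr 1
  ring

private lemma exists_param {y : Fin 3 → ℂ} (hy : OnK y) (h0 : y ≠ 0) :
    ∃ u s t : ℂ, u ≠ 0 ∧ y = u • ![s ^ 2, s * t, t ^ 2] := by
  unfold OnK at hy
  by_cases h : y 0 = 0
  · have h1 : y 1 = 0 := by
      have h2 : y 1 ^ 2 = 0 := by rw [← hy, h]; ring
      exact pow_eq_zero_iff (n := 2) (by norm_num) |>.mp h2
    have h2 : y 2 ≠ 0 := by
      intro hz
      apply h0
      rw [eta3 y, h, h1, hz]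
      funext i; fin_cases i <;> simp
    refine ⟨y 2, 0, 1, h2, ?_⟩
    conv_lhs => rw [eta3 y, h, h1]
    simp only [Matrix.smul_cons, Matrix.smul_empty, smul_eq_mul]
    exact vec3_eq (by ring) (by ring) (by ring)
  · refine ⟨(y 0)⁻¹, y 0, y 1, inv_ne_zero h, ?_⟩
    conv_lhs => rw [eta3 y]
    simp only [Matrix.smul_cons, Matrix.smul_empty, smul_eq_mul]
    refine vec3_eq ?_ ?_ ?_
    · field_simp
      try ring
    · field_simp
      try ring
    · rw [← hy]
      field_simp
      try ring

private lemma dij_ne {P Q : Fin 3 → ℂ} {uP uQ sP tP sQ tQ : ℂ}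
    (hP : P = uP • ![sP ^ 2, sP * tP, tP ^ 2]) (hQ : Q = uQ • ![sQ ^ 2, sQ * tQ, tQ ^ 2])
    (huQ : uQ ≠ 0) (hQ0 : Q ≠ 0) (hnp : ∀ c : ℂ, P ≠ c • Q) :
    sP * tQ - sQ * tP ≠ 0 := by
  intro h
  have hh : sP * tQ = sQ * tP := by linear_combination h
  by_cases ht : tQ = 0
  · have hsQ : sQ ≠ 0 := by
      intro hs
      apply hQ0
      rw [hQ, hs, ht]
      funext i; fin_cases i <;> simp
    have htP : tP = 0 := by
      have h2 : sQ * tP = 0 := by rw [← hh, ht]; ring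
      exact (mul_eq_zero.mp h2).resolve_left hsQ
    apply hnp (uP * (sP / sQ) ^ 2 * uQ⁻¹)
    rw [hP, hQ, ht, htP]
    simp only [Matrix.smul_cons, Matrix.smul_empty, smul_eq_mul]
    refine vec3_eq ?_ ?_ ?_
    · field_simp
      try exact Or.inl (by ring)
    · ring
    · ring
  · apply hnp (uP * (tP / tQ) ^ 2 * uQ⁻¹)
    rw [hP, hQ]
    simp only [Matrix.smul_cons, Matrix.smul_empty, smul_eq_mul]
    refine vec3_eq ?_ ?_ ?_
    · field_simp
      linear_combination uP * (sP * tQ + sQ * tP) * hh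
    · field_simp
      linear_combination uP * tP * hh
    · field_simp
      try exact Or.inl (by ring)

theorem coincide_implies_involution_I4
    (A B C D E F : Fin 3 → ℂ)
    (hdist : PairwiseNonProp ![A, B, C, D, E, F])
    (hKA : OnK A) (hKB : OnK B) (hKC : OnK C)
    (hKD : OnK D) (hKE : OnK E) (hKF : OnK F)
    (hcoin : pascalVec A B C F E D ⨯₃ pascalVec A B D E C F = 0) :
    (Matrix.of ![A ⨯₃ E, B ⨯₃ F, C ⨯₃ D]).det = 0 := by
  classical
  have np : ∀ i j : Fin 6, i ≠ j → ∀ c : ℂ, ![A, B, C, D, E, F] i ≠ c • ![A, B, C, D, E, F] j :=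
    hdist
  have hA0 : A ≠ 0 := by simpa using np 0 1 (by decide) 0
  have hB0 : B ≠ 0 := by simpa using np 1 0 (by decide) 0
  have hC0 : C ≠ 0 := by simpa using np 2 0 (by decide) 0
  have hD0 : D ≠ 0 := by simpa using np 3 0 (by decide) 0
  have hE0 : E ≠ 0 := by simpa using np 4 0 (by decide) 0
  have hF0 : F ≠ 0 := by simpa using np 5 0 (by decide) 0
  obtain ⟨u1, s1, t1, hu1, hA⟩ := exists_param hKA hA0
  obtain ⟨u2, s2, t2, hu2, hB⟩ := exists_param hKB hB0
  obtain ⟨u3, s3, t3, hu3, hC⟩ := exists_param hKC hC0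
  obtain ⟨u4, s4, t4, hu4, hD⟩ := exists_param hKD hD0
  obtain ⟨u5, s5, t5, hu5, hE⟩ := exists_param hKE hE0
  obtain ⟨u6, s6, t6, hu6, hF⟩ := exists_param hKF hF0
  have hd12 : s1 * t2 - s2 * t1 ≠ 0 := dij_ne hA hB hu2 hB0 (fun c => by simpa using np 0 1 (by decide) c)
  have hd13 : s1 * t3 - s3 * t1 ≠ 0 := dij_ne hA hC hu3 hC0 (fun c => by simpa using np 0 2 (by decide) c)
  have hd14 : s1 * t4 - s4 * t1 ≠ 0 := dij_ne hA hD hu4 hD0 (fun c => by simpa using np 0 3 (by decide) c)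
  have hd15 : s1 * t5 - s5 * t1 ≠ 0 := dij_ne hA hE hu5 hE0 (fun c => by simpa using np 0 4 (by decide) c)
  have hd16 : s1 * t6 - s6 * t1 ≠ 0 := dij_ne hA hF hu6 hF0 (fun c => by simpa using np 0 5 (by decide) c)
  have hd23 : s2 * t3 - s3 * t2 ≠ 0 := dij_ne hB hC hu3 hC0 (fun c => by simpa using np 1 2 (by decide) c)
  have hd25 : s2 * t5 - s5 * t2 ≠ 0 := dij_ne hB hE hu5 hE0 (fun c => by simpa using np 1 4 (by decide) c)
  have hd26 : s2 * t6 - s6 * t2 ≠ 0 := dij_ne hB hF hu6 hF0 (fun c => by simpa using np 1 5 (by decide) c)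
  have hd34 : s3 * t4 - s4 * t3 ≠ 0 := dij_ne hC hD hu4 hD0 (fun c => by simpa using np 2 3 (by decide) c)
  have hd36 : s3 * t6 - s6 * t3 ≠ 0 := dij_ne hC hF hu6 hF0 (fun c => by simpa using np 2 5 (by decide) c)
  have hd45 : s4 * t5 - s5 * t4 ≠ 0 := dij_ne hD hE hu5 hE0 (fun c => by simpa using np 3 4 (by decide) c)
  have hd46 : s4 * t6 - s6 * t4 ≠ 0 := dij_ne hD hF hu6 hF0 (fun c => by simpa using np 3 5 (by decide) c)
  have hd56 : s5 * t6 - s6 * t5 ≠ 0 := dij_ne hE hF hu6 hF0 (fun c => by simpa using np 4 5 (by decide) c)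
  have id1 : pascalVec ![s1 ^ 2, s1 * t1, t1 ^ 2] ![s2 ^ 2, s2 * t2, t2 ^ 2] ![s3 ^ 2, s3 * t3, t3 ^ 2]
      ![s6 ^ 2, s6 * t6, t6 ^ 2] ![s5 ^ 2, s5 * t5, t5 ^ 2] ![s4 ^ 2, s4 * t4, t4 ^ 2]
      = ((s1 * t4 - s4 * t1) * (s1 * t5 - s5 * t1) * (s1 * t6 - s6 * t1) * (s2 * t6 - s6 * t2) * (s3 * t6 - s6 * t3)) •
        (![s3*s6*t1*t2*t4*t5 - s3*s5*t1*t2*t4*t6 - s2*s6*t1*t3*t4*t5 + s2*s4*t1*t3*t5*t6 + s1*s5*t2*t3*t4*t6 - s1*s4*t2*t3*t5*t6, -s3*s4*s6*t1*t2*t5 + s3*s4*s5*t1*t2*t6 + s2*s5*s6*t1*t3*t4 - s2*s4*s5*t1*t3*t6 + s2*s3*s5*t1*t4*t6 - s2*s3*s4*t1*t5*t6 - s1*s5*s6*t2*t3*t4 + s1*s4*s6*t2*t3*t5 - s1*s3*s6*t2*t4*t5 + s1*s3*s4*t2*t5*t6 + s1*s2*s6*t3*t4*t5 - s1*s2*s5*t3*t4*t6,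 -s2*s3*s5*s6*t1*t4 + s2*s3*s4*s6*t1*t5 + s1*s3*s5*s6*t2*t4 - s1*s3*s4*s5*t2*t6 - s1*s2*s4*s6*t3*t5 + s1*s2*s4*s5*t3*t6] : Fin 3 → ℂ) := by
    simp only [pascalVec, chX1, chX2, cross_apply, Matrix.cons_val_zero, Matrix.cons_val_one,
      Matrix.cons_val_two, Matrix.head_cons, Matrix.tail_cons, Matrix.smul_cons,
      Matrix.smul_empty, smul_eq_mul]
    exact vec3_eq (by ring) (by ring) (by ring)
  have id2 : pascalVec ![s1 ^ 2, s1 * t1, t1 ^ 2] ![s2 ^ 2, s2 * t2, t2 ^ 2] ![s4 ^ 2, s4 * t4, t4 ^ 2]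
      ![s5 ^ 2, s5 * t5, t5 ^ 2] ![s3 ^ 2, s3 * t3, t3 ^ 2] ![s6 ^ 2, s6 * t6, t6 ^ 2]
      = ((s1 * t3 - s3 * t1) * (s1 * t5 - s5 * t1) * (s1 * t6 - s6 * t1) * (s2 * t5 - s5 * t2) * (s4 * t5 - s5 * t4)) •
        (![s4*s5*t1*t2*t3*t6 - s3*s4*t1*t2*t5*t6 + s2*s6*t1*t3*t4*t5 - s2*s5*t1*t3*t4*t6 - s1*s6*t2*t3*t4*t5 + s1*s3*t2*t4*t5*t6, -s4*s5*s6*t1*t2*t3 + s3*s4*s6*t1*t2*t5 - s2*s4*s6*t1*t3*t5 - s2*s3*s6*t1*t4*t5 + s2*s3*s5*t1*t4*t6 + s2*s3*s4*t1*t5*t6 + s1*s5*s6*t2*t3*t4 + s1*s4*s6*t2*t3*t5 - s1*s4*s5*t2*t3*t6 - s1*s3*s5*t2*t4*t6 + s1*s2*s5*t3*t4*t6 - s1*s2*s3*t4*t5*t6, s2*s4*s5*s6*t1*t3 - s2*s3*s4*s5*t1*t6 - s1*s3*s4*s6*t2*t5 + s1*s3*s4*s5*t2*t6 - s1*s2*s5*s6*t3*t4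 + s1*s2*s3*s6*t4*t5] : Fin 3 → ℂ) := by
    simp only [pascalVec, chX1, chX2, cross_apply, Matrix.cons_val_zero, Matrix.cons_val_one,
      Matrix.cons_val_two, Matrix.head_cons, Matrix.tail_cons, Matrix.smul_cons,
      Matrix.smul_empty, smul_eq_mul]
    exact vec3_eq (by ring) (by ring) (by ring)
  rw [hA, hB, hC, hD, hE, hF, pascalVec_smul, pascalVec_smul, id1, id2, smul_smul, smul_smul,
    cross3_smul_smul] at hcoin
  have hl : (![s3*s6*t1*t2*t4*t5 - s3*s5*t1*t2*t4*t6 - s2*s6*t1*t3*t4*t5 + s2*s4*t1*t3*t5*t6 + s1*s5*t2*t3*t4*t6 - s1*s4*t2*t3*t5*t6, -s3*s4*s6*t1*t2*t5 + s3*s4*s5*t1*t2*t6 + s2*s5*s6*t1*t3*t4 - s2*s4*s5*t1*t3*t6 + s2*s3*s5*t1*t4*t6 - s2*s3*s4*t1*t5*t6 - s1*s5*s6*t2*t3*t4 + s1*s4*s6*t2*t3*t5 - s1*s3*s6*t2*t4*t5 + s1*s3*s4*t2*t5*t6 + s1*s2*s6*t3*t4*t5 - s1*s2*s5*t3*t4*t6,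 -s2*s3*s5*s6*t1*t4 + s2*s3*s4*s6*t1*t5 + s1*s3*s5*s6*t2*t4 - s1*s3*s4*s5*t2*t6 - s1*s2*s4*s6*t3*t5 + s1*s2*s4*s5*t3*t6] : Fin 3 → ℂ) ⨯₃ (![s4*s5*t1*t2*t3*t6 - s3*s4*t1*t2*t5*t6 + s2*s6*t1*t3*t4*t5 - s2*s5*t1*t3*t4*t6 - s1*s6*t2*t3*t4*t5 + s1*s3*t2*t4*t5*t6, -s4*s5*s6*t1*t2*t3 + s3*s4*s6*t1*t2*t5 - s2*s4*s6*t1*t3*t5 - s2*s3*s6*t1*t4*t5 + s2*s3*s5*t1*t4*t6 + s2*s3*s4*t1*t5*t6 + s1*s5*s6*t2*t3*t4 + s1*s4*s6*t2*t3*t5 - s1*s4*s5*t2*t3*t6 - s1*s3*s5*t2*t4*t6 + s1*s2*s5*t3*t4*t6 - s1*s2*s3*t4*t5*t6, s2*s4*s5*s6*t1*t3 - s2*s3*s4*s5*t1*t6 - s1*s3*s4*s6*t2*t5 + s1*s3*s4*s5*t2*t6 - s1*s2*s5*s6*t3*t4 + s1*s2*s3*s6*t4*t5] : Fin 3 → ℂ)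 = 0 := by
    refine (smul_eq_zero.mp hcoin).resolve_left ?_
    repeat' apply mul_ne_zero
    all_goals first
      | exact pow_ne_zero _ hu1
      | exact pow_ne_zero _ hu5
      | exact pow_ne_zero _ hu6
      | assumption
  have e0 := congrFun hl 0
  have e1 := congrFun hl 1
  have e2 := congrFun hl 2
  simp only [cross_apply, Matrix.cons_val_zero, Matrix.cons_val_one, Matrix.cons_val_two,
    Matrix.head_cons, Matrix.tail_cons, Pi.zero_apply] at e0 e1 e2
  have hq : (-s3*s4*s6*t1*t2*t5 + s3*s4*s5*t1*t2*t6 - s2*s5*s6*t1*t3*t4 + s2*s4*s6*t1*t3*t5 + s2*s3*s6*t1*t4*t5 - s2*s3*s4*t1*t5*t6 + s1*s5*s6*t2*t3*t4 - s1*s4*s5*t2*t3*t6 - s1*s3*s5*t2*t4*t6 + s1*s3*s4*t2*t5*t6 - s1*s2*s6*t3*t4*t5 + s1*s2*s5*t3*t4*t6 : ℂ) = 0 := by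
    have hcomb : (-s3*s4*s6*t1*t2*t5 + s3*s4*s5*t1*t2*t6 - s2*s5*s6*t1*t3*t4 + s2*s4*s6*t1*t3*t5 + s2*s3*s6*t1*t4*t5 - s2*s3*s4*t1*t5*t6 + s1*s5*s6*t2*t3*t4 - s1*s4*s5*t2*t3*t6 - s1*s3*s5*t2*t4*t6 + s1*s3*s4*t2*t5*t6 - s1*s2*s6*t3*t4*t5 + s1*s2*s5*t3*t4*t6 : ℂ) *
        ((s1*t2 - s2*t1) * (s2*t3 - s3*t2) * (s4*t6 - s6*t4) * (s5*t6 - s6*t5)) = 0 := by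
      linear_combination (-(t2*t6)) * e0 + (s2*t6 + s6*t2) * e1 + (-(s2*s6)) * e2
    rcases mul_eq_zero.mp hcomb with h | h
    · exact h
    · exact absurd h (mul_ne_zero (mul_ne_zero (mul_ne_zero hd12 hd23) hd46) hd56)
  rw [hA, hB, hC, hD, hE, hF, Matrix.det_fin_three]
  simp only [Matrix.of_apply, Matrix.cons_val', Matrix.cons_val_zero, Matrix.cons_val_one,
    Matrix.cons_val_two, Matrix.head_cons, Matrix.tail_cons, Matrix.empty_val',
    Matrix.cons_val_fin_one, Matrix.head_fin_const, cross_apply, Pi.smul_apply,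
    Matrix.smul_cons, Matrix.smul_empty, smul_eq_mul]
  linear_combination (u1*u2*u3*u4*u5*u6 * (s1*t5 - s5*t1) * (s2*t6 - s6*t2) * (s3*t4 - s4*t3)) * hq

end

end PascalStmt
end

section
/- Let p, q, r ∈ ℂ be pairwise distinct with none equal to 0 or 1, and set A = (1,0,0), B = (1,1,1), C = (0,0,1), D = (1,p,p²), E = (1,q,q²), F = (1,r,r²) on the conic K. If the Pascal lines of the arrays [[A,B,C],[F,E,D]] and [[A,E,C],[D,B,F]] coincide (the cross product of their Pascal vectors is zero), then r = −p and q(1+p) = p(1−p); that is, the six points are in the ricochet configuration. -/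
set_option maxHeartbeats 1000000


open Matrix

namespace PascalStmt

noncomputable section

theorem coincide_implies_ricochet
    (p q r : ℂ)
    (hpq : p ≠ q) (hpr : p ≠ r) (hqr : q ≠ r)
    (hp0 : p ≠ 0) (hq0 : q ≠ 0) (hr0 : r ≠ 0)
    (hp1 : p ≠ 1) (hq1 : q ≠ 1) (hr1 : r ≠ 1)
    (A B C D E F : Fin 3 → ℂ)
    (hA : A = ![1, 0, 0]) (hB : B = ![1, 1, 1]) (hC : C = ![0, 0, 1])
    (hD : D = ![1, p, p ^ 2]) (hE : E = ![1, q, q ^ 2]) (hF : F = ![1, r, r ^ 2])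
    (hcoin : pascalVec A B C F E D ⨯₃ pascalVec A E C D B F = 0) :
    r = -p ∧ q * (1 + p) = p * (1 - p) := by
  subst hA hB hC hD hE hF
  -- explicit Pascal vectors
  have hL1 : pascalVec ![1,0,0] ![1,1,1] ![0,0,1] ![1,r,r^2] ![1,q,q^2] ![1,p,p^2] =
      ![(-1)*p*q^2*r^2 + p*q^2*r^3 + p^2*q*r^2 + (-1)*p^2*q*r^3,
        p*q^2*r + (-1)*p*q^2*r^2 + (-1)*p^2*q*r + p^2*q*r^3 + p^2*q^2*r + (-1)*p^2*q^2*r^2,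
        p*q*r^2 + (-1)*p*q*r^3 + (-1)*p*q^2*r + p*q^2*r^2] := by
    funext i; fin_cases i <;> simp [pascalVec, chX1, chX2, cross_apply] <;> ring
  have hL2 : pascalVec ![1,0,0] ![1,q,q^2] ![0,0,1] ![1,p,p^2] ![1,1,1] ![1,r,r^2] =
      ![(-1)*p^2*q^2*r + p^2*q^2*r^2 + p^3*q*r + (-1)*p^3*q*r^2,
        p*q*r^2 + p*q^2*r + (-1)*p*q^2*r^2 + (-1)*p^2*r^2 + (-1)*p^2*q*r + p^3*r^2,
        (-1)*p*q*r + p^2*r + p^2*q*r + (-1)*p^3*r] := by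
    funext i; fin_cases i <;> simp [pascalVec, chX1, chX2, cross_apply] <;> ring
  rw [hL1, hL2] at hcoin
  have h0 := congrFun hcoin 0
  have h1 := congrFun hcoin 1
  have h2 := congrFun hcoin 2
  simp only [cross_apply, Pi.zero_apply, Matrix.cons_val_zero, Matrix.cons_val_one,
    Matrix.head_cons, Matrix.cons_val_two, Matrix.tail_cons] at h0 h1 h2
  -- nonzero units
  have hr1' : r - 1 ≠ 0 := sub_ne_zero.mpr hr1
  have hp1' : p - 1 ≠ 0 := sub_ne_zero.mpr hp1
  have hq1' : q - 1 ≠ 0 := sub_ne_zero.mpr hq1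
  have hpq' : p - q ≠ 0 := sub_ne_zero.mpr hpq
  have hU : p^2*q*r^2*(r-1)*(p-q) ≠ 0 := by
    apply mul_ne_zero (mul_ne_zero (mul_ne_zero (mul_ne_zero (pow_ne_zero 2 hp0) hq0)
      (pow_ne_zero 2 hr0)) hr1') hpq'
  -- reduced equations
  have hG0 : (-1)*r^2 + (-1)*q + q*r^2 + q^2 + (-1)*q^2*r + p + p*r + p*r^2 + (-1)*p*q*r
      + (-1)*p^2 + (-1)*p^2*r + p^2*q = 0 := by
    have h : (p^2*q*r^2*(r-1)*(p-q)) * ((-1)*r^2 + (-1)*q + q*r^2 + q^2 + (-1)*q^2*r + p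
        + p*r + p*r^2 + (-1)*p*q*r + (-1)*p^2 + (-1)*p^2*r + p^2*q) = 0 := by
      linear_combination h0
    exact (mul_eq_zero.mp h).resolve_left hU
  have hG1 : (-1)*q*r + p*r + p*q*r^2 + p*q^2 + (-1)*p*q^2*r + (-1)*p^2*r = 0 := by
    have h : (p^2*q*r^2*(r-1)*(p-q)) * ((-1)*q*r + p*r + p*q*r^2 + p*q^2 + (-1)*p*q^2*r
        + (-1)*p^2*r) = 0 := by
      linear_combination h1
    exact (mul_eq_zero.mp h).resolve_left hU
  -- the ricochet relation for q
  have hV : q * (1 + p) = p * (1 - p) := by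
    have hUV : p*q*(p-1)^3*(q-1)^2*(p-q)^2 ≠ 0 :=
      mul_ne_zero (mul_ne_zero (mul_ne_zero (mul_ne_zero hp0 hq0) (pow_ne_zero 3 hp1'))
        (pow_ne_zero 2 hq1')) (pow_ne_zero 2 hpq')
    have h : (p*q*(p-1)^3*(q-1)^2*(p-q)^2) * (q * (1 + p) - p * (1 - p)) = 0 := by
      linear_combination
        (p*q^3 + (-1)*p*q^4 + (-2)*p^2*q^2 + p^2*q^3 + (-1)*p^2*q^3*r + 2*p^2*q^4 + p^2*q^4*r
          + (-1)*p^2*q^5 + p^3*q + 3*p^3*q^2 + p^3*q^2*r + (-5)*p^3*q^3 + (-1)*p^3*q^4*r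
          + p^3*q^5 + (-3)*p^4*q + p^4*q^2 + (-2)*p^4*q^2*r + 3*p^4*q^3 + 2*p^4*q^3*r
          + (-1)*p^4*q^4 + 3*p^5*q + (-3)*p^5*q^2 + p^5*q^2*r + (-1)*p^5*q^3*r + (-1)*p^6*q
          + p^6*q^2) * hG0 +
        ((-1)*p*q^2*r + 2*p*q^3*r + (-1)*p*q^4 + (-1)*p*q^4*r + p*q^5 + p^2*q*r + p^2*q^2
          + (-1)*p^2*q^3 + (-2)*p^2*q^3*r + p^2*q^4 + p^2*q^4*r + (-1)*p^2*q^5 + (-1)*p^3*q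
          + (-3)*p^3*q*r + (-1)*p^3*q^2 + 4*p^3*q^2*r + 2*p^3*q^3 + (-1)*p^3*q^3*r + 3*p^4*q
          + 3*p^4*q*r + (-2)*p^4*q^2 + (-4)*p^4*q^2*r + (-1)*p^4*q^3 + p^4*q^3*r + (-3)*p^5*q
          + (-1)*p^5*q*r + 3*p^5*q^2 + p^5*q^2*r + p^6*q + (-1)*p^6*q^2) * hG1
    have := (mul_eq_zero.mp h).resolve_left hUV
    linear_combination this
  refine ⟨?_, hV⟩
  -- 1 + p ≠ 0
  have hp1p : (1 : ℂ) + p ≠ 0 := by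
    intro h
    have hpm : p = -1 := by linear_combination h
    rw [hpm] at hV
    norm_num at hV
  -- now r = -p
  by_contra hne
  have hrp : r + p ≠ 0 := fun h => hne (by linear_combination h)
  have e1 : (p^2*(p-1)*(r+p)) * ((p-1) - r*(1+p)) = 0 := by
    linear_combination (1+p)^2 * hG1 -
      ((-1)*r + (-1)*p*r + p*r^2 + p*q + (-1)*p*q*r + p^2 + (-1)*p^2*r + p^2*r^2 + p^2*q
        + (-1)*p^2*q*r + (-1)*p^3 + p^3*r) * hV
  have hW1 : (p-1) - r*(1+p) = 0 := by
    have hu1 : p^2*(p-1)*(r+p) ≠ 0 :=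
      mul_ne_zero (mul_ne_zero (pow_ne_zero 2 hp0) hp1') hrp
    exact (mul_eq_zero.mp e1).resolve_left hu1
  have hG2 : (-1)*q*r^2 + (-1)*q^2*r + q^2*r^2 + p*r^2 + p*q*r + p*q^2 + (-1)*p*q^2*r
      + (-1)*p^2*r^2 + (-1)*p^2*q + p^2*q*r^2 + p^2*q^2 + (-1)*p^2*q^2*r = 0 := by
    have h : (p^2*q*r^2*(r-1)*(p-q)) * ((-1)*q*r^2 + (-1)*q^2*r + q^2*r^2 + p*r^2 + p*q*r
        + p*q^2 + (-1)*p*q^2*r + (-1)*p^2*r^2 + (-1)*p^2*q + p^2*q*r^2 + p^2*q^2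
        + (-1)*p^2*q^2*r) = 0 := by
      linear_combination h2
    exact (mul_eq_zero.mp h).resolve_left hU
  have e2 : (p^2*(p-1)*(r+p)) * (p*(1+p) - r*(2+p+p^2)) = 0 := by
    linear_combination (1+p)^2 * hG2 -
      ((-1)*r^2 + (-1)*q*r + q*r^2 + p*q + (-2)*p*q*r + p*q*r^2 + p^2*r + 2*p^2*q
        + (-2)*p^2*q*r + (-1)*p^3 + p^3*r^2 + p^3*q + (-1)*p^3*q*r + (-1)*p^4 + p^4*r) * hV
  have hW2 : p*(1+p) - r*(2+p+p^2) = 0 := by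
    have hu1 : p^2*(p-1)*(r+p) ≠ 0 :=
      mul_ne_zero (mul_ne_zero (pow_ne_zero 2 hp0) hp1') hrp
    exact (mul_eq_zero.mp e2).resolve_left hu1
  have hpp : p^2 = -1 := by
    linear_combination ((1+p) * hW2 - (2+p+p^2) * hW1) / 2
  have hrp2 : (r - p) * (1 + p) = 0 := by
    linear_combination (-1) * hW1 - hpp
  rcases mul_eq_zero.mp hrp2 with h | h
  · exact hpr (show p = r by linear_combination -h)
  · exact hp1p h

end

end PascalStmt
end

section
/- Let d ∈ ℂ with d ∉ {0, 1, −1}, let e = d(1−d)/(1+d), and set A = (1,0,0), B = (1,1,1), C = (0,0,1), D = (1,d,d²), E = (1,e,e²), F = (1,−d,d²) on the conic K; assume these six points are pairwise non-proportional. Then all six cross-hair points of the two arrays [[A,B,C],[F,E,D]] and [[A,E,C],[D,B,F]] lie on the single line {y : d²y₀ + y₂ = 0}; in particular the two Pascal lines coincide, and this common line also contains the point V = (0,1,0) (the intersection of the tangents to K at A and C) and the point W = (A×F)×(C×D). -/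
open Matrix

namespace PascalStmt

noncomputable section

set_option maxHeartbeats 1600000 in
theorem ricochet_common_line_aux
    (d : ℂ) (hd0 : d ≠ 0) (hd1 : d ≠ 1) (hdm1 : d ≠ -1)
    (e : ℂ) (he : e = d * (1 - d) / (1 + d))
    (A B C D E F : Fin 3 → ℂ)
    (hA : A = ![1, 0, 0]) (hB : B = ![1, 1, 1]) (hC : C = ![0, 0, 1])
    (hD : D = ![1, d, d ^ 2]) (hE : E = ![1, e, e ^ 2]) (hF : F = ![1, -d, d ^ 2])
    (hdist : PairwiseNonProp ![A, B, C, D, E, F]) :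
    (d ^ 2 * chX1 A B C F E D 0 + chX1 A B C F E D 2 = 0) ∧
    (d ^ 2 * chX2 A B C F E D 0 + chX2 A B C F E D 2 = 0) ∧
    (d ^ 2 * chX3 A B C F E D 0 + chX3 A B C F E D 2 = 0) ∧
    (d ^ 2 * chX1 A E C D B F 0 + chX1 A E C D B F 2 = 0) ∧
    (d ^ 2 * chX2 A E C D B F 0 + chX2 A E C D B F 2 = 0) ∧
    (d ^ 2 * chX3 A E C D B F 0 + chX3 A E C D B F 2 = 0) ∧
    pascalVec A B C F E D ⨯₃ pascalVec A E C D B F = 0 ∧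
    (d ^ 2 * (![(0 : ℂ), 1, 0]) 0 + (![(0 : ℂ), 1, 0]) 2 = 0) ∧
    (d ^ 2 * ((A ⨯₃ F) ⨯₃ (C ⨯₃ D)) 0 + ((A ⨯₃ F) ⨯₃ (C ⨯₃ D)) 2 = 0) := by

  subst hA hB hC hD hE hF he
  have h1 : (1 + d) ≠ 0 := fun h => hdm1 (by linear_combination h)
  refine ⟨by simp only [chX1, chX2, chX3, cross_apply, Matrix.cons_val_zero, Matrix.cons_val_one, Matrix.head_cons, Matrix.cons_val_two, Matrix.tail_cons]; field_simp; try ring, by simp only [chX1, chX2, chX3, cross_apply, Matrix.cons_val_zero, Matrix.cons_val_one, Matrix.head_cons, Matrix.cons_val_two, Matrix.tail_cons]; field_simp; try ring, by simp only [chX1, chX2, chX3, cross_apply, Matrix.cons_val_zero, Matrix.cons_val_one, Matrix.head_cons, Matrix.cons_val_two, Matrix.tail_cons]; field_simp; try ring, by simp only [chX1, chX2, chX3, cross_apply, Matrix.cons_val_zero, Matrix.cons_val_one, Matrix.head_cons, Matrix.cons_val_two, Matrix.tail_cons]; field_simp; try ring, by simp only [chX1, chX2, chX3, cross_apply, Matrix.cons_val_zero,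 Matrix.cons_val_one, Matrix.head_cons, Matrix.cons_val_two, Matrix.tail_cons]; field_simp; try ring, by simp only [chX1, chX2, chX3, cross_apply, Matrix.cons_val_zero, Matrix.cons_val_one, Matrix.head_cons, Matrix.cons_val_two, Matrix.tail_cons]; field_simp; try ring, ?_, by simp, by simp only [chX1, chX2, chX3, cross_apply, Matrix.cons_val_zero, Matrix.cons_val_one, Matrix.head_cons, Matrix.cons_val_two, Matrix.tail_cons]; field_simp; try ring⟩
  set e := d*(1-d)/(1+d) with he
  have EV : ![1, e, e^2] = ![1, d*(1-d)/(1+d), (d*(1-d)/(1+d))^2] := by rw [he]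
  have hent : ∀ (u v : Fin 3 → ℂ), u = v → ∀ i, u i = v i := fun u v h i => h ▸ rfl
  have h11 : chX1 ![1,0,0] ![1,1,1] ![0,0,1] ![1,-d,d^2] ![1,e,e^2] ![1,d,d^2]
      = ![-(d*(d-1)^2)/(1+d), d^2*(1-d), d^3*(d-1)^2/(1+d)] := by
    rw [EV]; funext i; fin_cases i <;>
    · simp only [chX1, cross_apply, Matrix.cons_val_zero, Matrix.cons_val_one,
        Matrix.head_cons, Matrix.cons_val_two, Matrix.tail_cons, Fin.isValue,
        Fin.zero_eta, Fin.mk_one, Fin.reduceFinMk, Matrix.cons_val]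
      field_simp; ring
  have h12 : chX2 ![1,0,0] ![1,1,1] ![0,0,1] ![1,-d,d^2] ![1,e,e^2] ![1,d,d^2]
      = ![-d, d^2, d^3] := by
    funext i; fin_cases i <;>
    · simp only [chX2, cross_apply, Matrix.cons_val_zero, Matrix.cons_val_one,
        Matrix.head_cons, Matrix.cons_val_two, Matrix.tail_cons, Fin.isValue]
      ring
  have h21 : chX1 ![1,0,0] ![1,e,e^2] ![0,0,1] ![1,d,d^2] ![1,1,1] ![1,-d,d^2]
      = ![2*d^2*(d-1)/(1+d)^2, 2*d^4*(1-d)/(1+d)^2, 2*d^4*(1-d)/(1+d)^2] := by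
    rw [EV]; funext i; fin_cases i <;>
    · simp only [chX1, cross_apply, Matrix.cons_val_zero, Matrix.cons_val_one,
        Matrix.head_cons, Matrix.cons_val_two, Matrix.tail_cons, Fin.isValue,
        Fin.zero_eta, Fin.mk_one, Fin.reduceFinMk, Matrix.cons_val]
      field_simp; ring
  have h22 : chX2 ![1,0,0] ![1,e,e^2] ![0,0,1] ![1,d,d^2] ![1,1,1] ![1,-d,d^2]
      = ![d, d^2, -d^3] := by
    funext i; fin_cases i <;>
    · simp only [chX2, cross_apply, Matrix.cons_val_zero, Matrix.cons_val_one,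
        Matrix.head_cons, Matrix.cons_val_two, Matrix.tail_cons, Fin.isValue]
      ring
  have hp1 : pascalVec ![1,0,0] ![1,1,1] ![0,0,1] ![1,-d,d^2] ![1,e,e^2] ![1,d,d^2]
      = (2*d^4*(1-d)/(1+d)) • ![d^2, 0, 1] := by
    rw [pascalVec, h11, h12]; funext i; fin_cases i <;>
    · simp only [cross_apply, Matrix.cons_val_zero, Matrix.cons_val_one, Matrix.head_cons,
        Matrix.cons_val_two, Matrix.tail_cons, Pi.smul_apply, smul_eq_mul, Fin.isValue,
        Fin.zero_eta, Fin.mk_one, Fin.reduceFinMk, Matrix.cons_val]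
      field_simp; ring
  have hp2 : pascalVec ![1,0,0] ![1,e,e^2] ![0,0,1] ![1,d,d^2] ![1,1,1] ![1,-d,d^2]
      = (2*d^4*(d-1)/(1+d)) • ![d^2, 0, 1] := by
    rw [pascalVec, h21, h22]; funext i; fin_cases i <;>
    · simp only [cross_apply, Matrix.cons_val_zero, Matrix.cons_val_one, Matrix.head_cons,
        Matrix.cons_val_two, Matrix.tail_cons, Pi.smul_apply, smul_eq_mul, Fin.isValue,
        Fin.zero_eta, Fin.mk_one, Fin.reduceFinMk, Matrix.cons_val]
      field_simp; ring
  rw [hp1, hp2, LinearMap.map_smul, LinearMap.map_smul₂, cross_self, smul_zero, smul_zero]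

theorem ricochet_common_line
    (d : ℂ) (hd0 : d ≠ 0) (hd1 : d ≠ 1) (hdm1 : d ≠ -1)
    (e : ℂ) (he : e = d * (1 - d) / (1 + d))
    (A B C D E F : Fin 3 → ℂ)
    (hA : A = ![1, 0, 0]) (hB : B = ![1, 1, 1]) (hC : C = ![0, 0, 1])
    (hD : D = ![1, d, d ^ 2]) (hE : E = ![1, e, e ^ 2]) (hF : F = ![1, -d, d ^ 2])
    (hdist : PairwiseNonProp ![A, B, C, D, E, F]) :
    (d ^ 2 * chX1 A B C F E D 0 + chX1 A B C F E D 2 = 0) ∧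
    (d ^ 2 * chX2 A B C F E D 0 + chX2 A B C F E D 2 = 0) ∧
    (d ^ 2 * chX3 A B C F E D 0 + chX3 A B C F E D 2 = 0) ∧
    (d ^ 2 * chX1 A E C D B F 0 + chX1 A E C D B F 2 = 0) ∧
    (d ^ 2 * chX2 A E C D B F 0 + chX2 A E C D B F 2 = 0) ∧
    (d ^ 2 * chX3 A E C D B F 0 + chX3 A E C D B F 2 = 0) ∧
    pascalVec A B C F E D ⨯₃ pascalVec A E C D B F = 0 ∧
    (d ^ 2 * (![(0 : ℂ), 1, 0]) 0 + (![(0 : ℂ), 1, 0]) 2 = 0) ∧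
    (d ^ 2 * ((A ⨯₃ F) ⨯₃ (C ⨯₃ D)) 0 + ((A ⨯₃ F) ⨯₃ (C ⨯₃ D)) 2 = 0) :=
  ricochet_common_line_aux d hd0 hd1 hdm1 e he A B C D E F hA hB hC hD hE hF hdist

end

end PascalStmt
end
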